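/- arXiv:2111.12070 — 9 statements merged into one kernel-verified Lean document; each statement's English description precedes it below -/
import Mathlib

section
/- Let S ⊆ ℕ^d be an affine semigroup such that H(S) is finite and non-empty. Then PF(S) equals the set of maximal elements of H(S) with respect to the partial order defined by x ≤ y if and only if y − x ∈ S. -/
open Finset BigOperators

/-! Basic notions for affine semigroups in `ℕ^d`, following
"Affine semigroups of maximal projective dimension". -/

def natToQ {d : ℕ} (x : Fin d → ℕ) : Fin d → ℚ := fun i => (x i : ℚ)

def natToZ {d : ℕ} (x : Fin d → ℕ) : Fin d → ℤ := fun i => (x i : ℤ)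

/-- The rational cone spanned by an affine semigroup `S ⊆ ℕ^d`: the set of
nonnegative rational combinations of elements of `S` (equivalently, of any
generating set of `S`). -/
def cone {d : ℕ} (S : AddSubmonoid (Fin d → ℕ)) : Set (Fin d → ℚ) :=
  { q | ∃ (m : ℕ) (lam : Fin m → ℚ) (s : Fin m → Fin d → ℕ),
      (∀ i, 0 ≤ lam i) ∧ (∀ i, s i ∈ S) ∧ q = ∑ i, lam i • natToQ (s i) }

/-- `H(S) = (cone(S) \ S) ∩ ℕ^d`. -/
def HSet {d : ℕ} (S : AddSubmonoid (Fin d → ℕ)) : Set (Fin d → ℕ) :=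
  { x | natToQ x ∈ cone S ∧ x ∉ S }

/-- The set of pseudo-Frobenius elements of `S`. -/
def PF {d : ℕ} (S : AddSubmonoid (Fin d → ℕ)) : Set (Fin d → ℕ) :=
  { f | f ∈ HSet S ∧ ∀ s ∈ S, s ≠ 0 → f + s ∈ S }

/-- `A` is a minimal generating set of `S`. -/
def IsMinGenSet {d : ℕ} (A : Set (Fin d → ℕ)) (S : AddSubmonoid (Fin d → ℕ)) : Prop :=
  AddSubmonoid.closure A = S ∧ ∀ x ∈ A, x ∉ AddSubmonoid.closure (A \ {x})

/-- The family `a : Fin n → ℕ^d` is a minimal generating family (the minimal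
generating set) of `S`. -/
def MinGen {n d : ℕ} (a : Fin n → Fin d → ℕ) (S : AddSubmonoid (Fin d → ℕ)) : Prop :=
  Function.Injective a ∧ IsMinGenSet (Set.range a) S

/-- `G(S)`: the subgroup of `ℤ^d` generated by `S`. -/
def grpOf {d : ℕ} (S : AddSubmonoid (Fin d → ℕ)) : AddSubgroup (Fin d → ℤ) :=
  AddSubgroup.closure (natToZ '' (S : Set (Fin d → ℕ)))

/-- `S = S₁ +_c S₂` is a gluing of the affine semigroups `S₁` and `S₂`. -/
structure IsGluing {d : ℕ} (S S₁ S₂ : AddSubmonoid (Fin d → ℕ)) (c : Fin d → ℕ) : Prop where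
  exists_partition : ∃ A₁ A₂ : Set (Fin d → ℕ),
    A₁.Finite ∧ A₂.Finite ∧ A₁.Nonempty ∧ A₂.Nonempty ∧ Disjoint A₁ A₂ ∧
    IsMinGenSet (A₁ ∪ A₂) S ∧ S₁ = AddSubmonoid.closure A₁ ∧ S₂ = AddSubmonoid.closure A₂
  mem₁ : c ∈ S₁
  mem₂ : c ∈ S₂
  grp : grpOf S₁ ⊓ grpOf S₂ = AddSubgroup.zmultiples (natToZ c)

/-- A term order on `ℕ^d`: a total order compatible with addition for which `0`
is the least element. -/
structure TermOrder (d : ℕ) : Type where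
  lt : (Fin d → ℕ) → (Fin d → ℕ) → Prop
  irrefl : ∀ x, ¬ lt x x
  trans : ∀ {x y z}, lt x y → lt y z → lt x z
  total : ∀ x y, x = y ∨ lt x y ∨ lt y x
  zero_lt : ∀ x, x ≠ 0 → lt 0 x
  add_compat : ∀ {x y : Fin d → ℕ} (z : Fin d → ℕ), lt x y → lt (x + z) (y + z)

/-- `F` is the Frobenius element `F(S)_≺ = max_≺ H(S)`. -/
def IsFrob {d : ℕ} (τ : TermOrder d) (S : AddSubmonoid (Fin d → ℕ)) (F : Fin d → ℕ) : Prop :=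
  F ∈ HSet S ∧ ∀ x ∈ HSet S, x ≠ F → τ.lt x F

/-- `S` is `≺`-almost symmetric. -/
def AlmostSym {d : ℕ} (τ : TermOrder d) (S : AddSubmonoid (Fin d → ℕ)) : Prop :=
  ∃ F, IsFrob τ S F ∧ ((PF S) \ {F}).Nonempty ∧
    ∀ g ∈ (PF S) \ {F}, ∃ h ∈ (PF S) \ {F}, g + h = F

/-- A row-factorization matrix of `f` relative to the generators `a`. -/
def IsRFMatrix {n d : ℕ} (a : Fin n → Fin d → ℕ) (f : Fin d → ℕ)
    (M : Matrix (Fin n) (Fin n) ℤ) : Prop :=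
  (∀ i, M i i = -1) ∧ (∀ i j, i ≠ j → 0 ≤ M i j) ∧
  (∀ i, ∑ j, M i j • natToZ (a j) = natToZ f)

/-- The monomial `x^u` in `k[x_1,…,x_n]`. -/
noncomputable def mono (k : Type*) [CommRing k] {n : ℕ} (u : Fin n → ℕ) :
    MvPolynomial (Fin n) k :=
  MvPolynomial.monomial (Finsupp.equivFunOnFinite.symm u) 1

/-- The binomial `x^u - x^v`. -/
noncomputable def binom (k : Type*) [CommRing k] {n : ℕ} (u v : Fin n → ℕ) :
    MvPolynomial (Fin n) k :=
  mono k u - mono k v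

/-- The semigroup map `π : k[x_1,…,x_n] → k[t_1,…,t_d]`, `x_i ↦ t^{a_i}`. -/
noncomputable def toricMap (k : Type*) [CommRing k] {n d : ℕ} (a : Fin n → Fin d → ℕ) :
    MvPolynomial (Fin n) k →ₐ[k] MvPolynomial (Fin d) k :=
  MvPolynomial.aeval (fun i => mono k (a i))

/-- The toric ideal `I_S = ker π`. -/
noncomputable def toricIdeal (k : Type*) [CommRing k] {n d : ℕ} (a : Fin n → Fin d → ℕ) :
    Ideal (MvPolynomial (Fin n) k) :=
  RingHom.ker (toricMap k a).toRingHom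

/-- Positive part of an integer vector. -/
def pospart {n : ℕ} (v : Fin n → ℤ) : Fin n → ℕ := fun i => (v i).toNat

/-- Negative part of an integer vector. -/
def negpart {n : ℕ} (v : Fin n → ℤ) : Fin n → ℕ := fun i => (-(v i)).toNat

/-- `p` is an RF-relation: a binomial obtained from the difference of two rows of
some RF-matrix of some pseudo-Frobenius element. -/
def IsRFRelation (k : Type*) [CommRing k] {n d : ℕ} (a : Fin n → Fin d → ℕ)
    (S : AddSubmonoid (Fin d → ℕ)) (p : MvPolynomial (Fin n) k) : Prop :=
  ∃ f ∈ PF S, ∃ M : Matrix (Fin n) (Fin n) ℤ, IsRFMatrix a f M ∧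
    ∃ i j : Fin n, i < j ∧
      p = binom k (pospart fun l => M i l - M j l) (negpart fun l => M i l - M j l)

/-- The toric ideal `I_S` is generic: it is minimally generated by binomials of
full support. -/
def IsGeneric (k : Type*) [CommRing k] {n d : ℕ} (a : Fin n → Fin d → ℕ) : Prop :=
  ∃ G : Finset (MvPolynomial (Fin n) k),
    (∀ g ∈ G, ∃ u v : Fin n → ℕ, g = binom k u v ∧ ∀ l, u l ≠ 0 ∨ v l ≠ 0) ∧
    Ideal.span (G : Set (MvPolynomial (Fin n) k)) = toricIdeal k a ∧
    ∀ G' : Finset (MvPolynomial (Fin n) k), G' ⊂ G →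
      Ideal.span (G' : Set (MvPolynomial (Fin n) k)) ≠ toricIdeal k a

/-- The Apéry set `Ap(S, x) = { y ∈ S : y - x ∈ H(S) }`. -/
def Ap {d : ℕ} (S : AddSubmonoid (Fin d → ℕ)) (x : Fin d → ℕ) : Set (Fin d → ℕ) :=
  { y | y ∈ S ∧ ∃ z ∈ HSet S, y = x + z }

/-- `UF(S)`: elements with a unique factorization in terms of the generators `a`. -/
def UF {n d : ℕ} (a : Fin n → Fin d → ℕ) : Set (Fin d → ℕ) :=
  { x | ∃! u : Fin n → ℕ, x = ∑ l, u l • a l }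

open Classical in
/-- The multivariate Hilbert series `Σ_{a ∈ S} t^a` of `S`. -/
noncomputable def hilbSeries {d : ℕ} (S : AddSubmonoid (Fin d → ℕ)) :
    MvPowerSeries (Fin d) ℤ :=
  fun e => if Finsupp.equivFunOnFinite e ∈ S then 1 else 0

/-- If `H(S)` is finite and non-empty, then `PF(S)` is the set of
maximal elements of `H(S)` for the order `x ≤ y ↔ y - x ∈ S`. -/
theorem PF_eq_maximals {d : ℕ} (S : AddSubmonoid (Fin d → ℕ)) (hFG : S.FG)
    (hfin : (HSet S).Finite) (hne : (HSet S).Nonempty) :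
    PF S = { x | x ∈ HSet S ∧ ∀ y ∈ HSet S, (∃ s ∈ S, x + s = y) → y = x } := by
  ext x
  simp only [PF, Set.mem_setOf_eq]
  constructor
  · rintro ⟨hx, hpf⟩
    refine ⟨hx, ?_⟩
    rintro y hy ⟨s, hs, rfl⟩
    by_contra hne'
    have hs0 : s ≠ 0 := by rintro rfl; simp at hne'
    exact hy.2 (hpf s hs hs0)
  · rintro ⟨hx, hmax⟩
    refine ⟨hx, ?_⟩
    intro s hs hs0
    by_contra hns
    have hc : natToQ (x + s) ∈ cone S := by
      obtain ⟨m, lam, sf, hlam, hsf, heq⟩ := hx.1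
      refine ⟨m + 1, Fin.cons 1 lam, Fin.cons s sf, ?_, ?_, ?_⟩
      · intro i; refine Fin.cases ?_ ?_ i <;> simp [hlam]
      · intro i; refine Fin.cases ?_ ?_ i <;> simp [hs, hsf]
      · have hadd : natToQ (x + s) = natToQ x + natToQ s := by
          funext i; simp [natToQ]
        rw [hadd, heq, Fin.sum_univ_succ]
        simp [add_comm]
    have hmem : x + s ∈ HSet S := ⟨hc, hns⟩
    have heq := hmax _ hmem ⟨s, hs, rfl⟩
    have : s = 0 := by
      funext i
      have := congrFun heq i
      simpa using this
    exact hs0 this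
end

section
/- Let S ⊆ ℕ^d be an affine semigroup such that H(S) is finite and non-empty. If x ∈ H(S), then there exists f ∈ PF(S) with f − x ∈ S. Conversely, if x ∈ cone(S) ∩ ℕ^d and there exists f ∈ PF(S) with f − x ∈ S, then x ∈ H(S) (in particular x ∉ S). -/
open Finset BigOperators

lemma natToQ_mem_cone {d : ℕ} {S : AddSubmonoid (Fin d → ℕ)} {s : Fin d → ℕ}
    (hs : s ∈ S) : natToQ s ∈ cone S := by
  refine ⟨1, fun _ => 1, fun _ => s, fun _ => zero_le_one, fun _ => hs, ?_⟩
  simp [Fin.sum_univ_one]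

lemma cone_add {d : ℕ} {S : AddSubmonoid (Fin d → ℕ)} {p q : Fin d → ℚ}
    (hp : p ∈ cone S) (hq : q ∈ cone S) : p + q ∈ cone S := by
  obtain ⟨m1, lam1, s1, h1a, h1b, h1c⟩ := hp
  obtain ⟨m2, lam2, s2, h2a, h2b, h2c⟩ := hq
  refine ⟨m1 + m2, Fin.append lam1 lam2, Fin.append s1 s2, ?_, ?_, ?_⟩
  · intro i
    induction i using Fin.addCases with
    | left i => simpa using h1a i
    | right i => simpa using h2a i
  · intro i
    induction i using Fin.addCases with
    | left i => simpa using h1b i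
    | right i => simpa using h2b i
  · rw [h1c, h2c, Fin.sum_univ_add]
    congr 1 <;> apply Finset.sum_congr rfl <;> intro i _ <;> simp

lemma natToQ_add {d : ℕ} (a b : Fin d → ℕ) : natToQ (a + b) = natToQ a + natToQ b := by
  funext i; simp [natToQ]

/-- For `H(S)` finite and non-empty: `x ∈ H(S)` iff `x` lies in
`cone(S) ∩ ℕ^d` and `f - x ∈ S` for some pseudo-Frobenius element `f`. -/
theorem mem_HSet_iff_exists_PF {d : ℕ} (S : AddSubmonoid (Fin d → ℕ)) (hFG : S.FG)
    (hfin : (HSet S).Finite) (hne : (HSet S).Nonempty) (x : Fin d → ℕ) :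
    (x ∈ HSet S → ∃ f ∈ PF S, ∃ s ∈ S, x + s = f) ∧
    ((natToQ x ∈ cone S ∧ ∃ f ∈ PF S, ∃ s ∈ S, x + s = f) → x ∈ HSet S) := by
  constructor
  · intro hx
    -- the set of elements of H(S) reachable from x
    set T : Set (Fin d → ℕ) := {y | y ∈ HSet S ∧ ∃ s ∈ S, x + s = y} with hT
    have hTfin : T.Finite := hfin.subset (fun y hy => hy.1)
    have hTne : T.Nonempty := ⟨x, hx, 0, S.zero_mem, add_zero x⟩
    obtain ⟨f, hfT, hfmax⟩ := Set.Finite.exists_maximalFor (fun y => ∑ i, y i) T hTfin hTne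
    obtain ⟨hfH, s0, hs0, hxs0⟩ := hfT
    refine ⟨f, ⟨hfH, ?_⟩, s0, hs0, hxs0⟩
    intro s hs hsne
    by_contra hns
    have hcone : natToQ (f + s) ∈ cone S := by
      rw [natToQ_add]
      exact cone_add hfH.1 (natToQ_mem_cone hs)
    have hmem : f + s ∈ T := by
      refine ⟨⟨hcone, hns⟩, s0 + s, S.add_mem hs0 hs, ?_⟩
      rw [← add_assoc, hxs0]
    have hle : (∑ i, f i) ≤ ∑ i, (f + s) i := by
      apply Finset.sum_le_sum
      intro i _
      simp
    have : (∑ i, (f + s) i) ≤ ∑ i, f i := hfmax (j := f + s) hmem hle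
    have hsz : s = 0 := by
      funext i
      by_contra hi
      have hpos : 0 < s i := Nat.pos_of_ne_zero hi
      have : (∑ i, f i) < ∑ i, (f + s) i := by
        apply Finset.sum_lt_sum (fun j _ => by simp)
        exact ⟨i, Finset.mem_univ i, by simpa using hpos⟩
      omega
    exact hsne hsz
  · rintro ⟨hxc, f, hf, s, hs, hxs⟩
    refine ⟨hxc, ?_⟩
    intro hxS
    exact hf.1.2 (hxs ▸ S.add_mem hxS hs)
end

section
/- Let S ⊆ ℕ^d be a C-semigroup, let ≺ be a term order on ℕ^d, and let F = F(S)_≺ = max_≺ H(S). Then S is ≺-symmetric (i.e., PF(S) = {F}) if and only if for every g ∈ cone(S) ∩ ℕ^d one has: g ∈ S if and only if F − g ∉ S. -/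
open Finset BigOperators

lemma mem_cone_of_mem {d : ℕ} (S : AddSubmonoid (Fin d → ℕ)) {s : Fin d → ℕ}
    (hs : s ∈ S) : natToQ s ∈ cone S :=
  ⟨1, fun _ => 1, fun _ => s, fun _ => zero_le_one, fun _ => hs, by simp⟩

lemma cone_add_s4 {d : ℕ} {S : AddSubmonoid (Fin d → ℕ)} {x y : Fin d → ℚ}
    (hx : x ∈ cone S) (hy : y ∈ cone S) : x + y ∈ cone S := by
  obtain ⟨m, lam, s, h1, h2, h3⟩ := hx
  obtain ⟨m', lam', s', h1', h2', h3'⟩ := hy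
  refine ⟨m + m', Fin.append lam lam', Fin.append s s', ?_, ?_, ?_⟩
  · intro i
    refine Fin.addCases (fun i => ?_) (fun i => ?_) i
    · simpa [Fin.append_left] using h1 i
    · simpa [Fin.append_right] using h1' i
  · intro i
    refine Fin.addCases (fun i => ?_) (fun i => ?_) i
    · simpa [Fin.append_left] using h2 i
    · simpa [Fin.append_right] using h2' i
  · rw [Fin.sum_univ_add]
    simp only [Fin.append_left, Fin.append_right]
    rw [h3, h3']

lemma termOrder_exists_max {d : ℕ} (τ : TermOrder d) (t : Finset (Fin d → ℕ)) :
    t.Nonempty → ∃ m ∈ t, ∀ x ∈ t, x ≠ m → τ.lt x m := by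
  classical
  induction t using Finset.induction with
  | empty => intro h; simp at h
  | @insert a t' ha ih =>
    intro _
    rcases t'.eq_empty_or_nonempty with h | h
    · subst h
      refine ⟨a, by simp, ?_⟩
      intro x hx hne
      simp only [Finset.mem_insert, Finset.notMem_empty, or_false] at hx
      exact absurd hx hne
    · obtain ⟨m, hm, hmax⟩ := ih h
      rcases τ.total a m with he | hl | hg
      · subst he
        refine ⟨a, Finset.mem_insert_self _ _, ?_⟩
        intro x hx hne
        rcases Finset.mem_insert.1 hx with rfl | hx'
        · exact absurd rfl hne
        · exact hmax x hx' hne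
      · refine ⟨m, Finset.mem_insert_of_mem hm, ?_⟩
        intro x hx hne
        rcases Finset.mem_insert.1 hx with rfl | hx'
        · exact hl
        · exact hmax x hx' hne
      · refine ⟨a, Finset.mem_insert_self _ _, ?_⟩
        intro x hx hne
        rcases Finset.mem_insert.1 hx with rfl | hx'
        · exact absurd rfl hne
        · by_cases hxm : x = m
          · subst hxm; exact hg
          · exact τ.trans (hmax x hx' hxm) hg

/-- Characterization of `≺`-symmetric `C`-semigroups. -/
theorem precSymmetric_iff {d : ℕ} (S : AddSubmonoid (Fin d → ℕ)) (hFG : S.FG)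
    (hfin : (HSet S).Finite) (hne : (HSet S).Nonempty)
    (τ : TermOrder d) (F : Fin d → ℕ) (hF : IsFrob τ S F) :
    PF S = {F} ↔
      ∀ g : Fin d → ℕ, natToQ g ∈ cone S → (g ∈ S ↔ ¬ ∃ s ∈ S, g + s = F) := by
  obtain ⟨⟨hFcone, hFnot⟩, hFmax⟩ := hF
  constructor
  · intro hPF g hg
    constructor
    · rintro hgS ⟨s, hs, hgs⟩
      exact hFnot (hgs ▸ S.add_mem hgS hs)
    · intro hno
      by_contra hgS
      have hgH : g ∈ HSet S := ⟨hg, hgS⟩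
      set X : Set (Fin d → ℕ) := {h | h ∈ HSet S ∧ ∃ s ∈ S, g + s = h} with hXdef
      have hXfin : X.Finite := hfin.subset fun x hx => hx.1
      have hgX : g ∈ X := ⟨hgH, 0, S.zero_mem, by simp⟩
      obtain ⟨m, hmX, hmax⟩ :=
        termOrder_exists_max τ hXfin.toFinset ⟨g, hXfin.mem_toFinset.2 hgX⟩
      rw [Set.Finite.mem_toFinset] at hmX
      obtain ⟨hmH, s₀, hs₀, hgs₀⟩ := hmX
      have hmPF : m ∈ PF S := by
        refine ⟨hmH, fun t ht htne => ?_⟩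
        by_contra hnotS
        have hcone : natToQ (m + t) ∈ cone S := by
          rw [natToQ_add]; exact cone_add_s4 hmH.1 (mem_cone_of_mem S ht)
        have hmem : m + t ∈ X :=
          ⟨⟨hcone, hnotS⟩, s₀ + t, S.add_mem hs₀ ht, by rw [← add_assoc, hgs₀]⟩
        have hne' : m + t ≠ m := by
          intro hEq
          apply htne
          have : m + t = m + 0 := by rw [add_zero]; exact hEq
          exact add_left_cancel this
        have hlt := hmax (m + t) (hXfin.mem_toFinset.2 hmem) hne'
        have hlt' : τ.lt m (m + t) := by
          have := τ.add_compat m (τ.zero_lt t htne)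
          rwa [zero_add, add_comm t m] at this
        exact τ.irrefl m (τ.trans hlt' hlt)
      rw [hPF, Set.mem_singleton_iff] at hmPF
      subst hmPF
      exact hno ⟨s₀, hs₀, hgs₀⟩
  · intro h
    ext f
    simp only [Set.mem_singleton_iff]
    constructor
    · rintro ⟨hfH, hfPF⟩
      have hiff := h f hfH.1
      have hex : ∃ s ∈ S, f + s = F := by
        by_contra hno
        exact hfH.2 (hiff.2 hno)
      obtain ⟨s, hs, hfs⟩ := hex
      by_cases hs0 : s = 0
      · subst hs0; simpa using hfs
      · exact absurd (hfs ▸ hfPF s hs hs0) hFnot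
    · rintro rfl
      refine ⟨⟨hFcone, hFnot⟩, fun s hs hsne => ?_⟩
      have hc : natToQ (f + s) ∈ cone S := by
        rw [natToQ_add]; exact cone_add_s4 hFcone (mem_cone_of_mem S hs)
      rw [h (f + s) hc]
      rintro ⟨t, ht, hFt⟩
      have hst : f + (s + t) = f + 0 := by rw [add_zero, ← add_assoc]; exact hFt
      have hst0 := add_left_cancel hst
      apply hsne
      funext i
      have := congrFun hst0 i
      simp only [Pi.add_apply, Pi.zero_apply] at this
      exact Nat.eq_zero_of_add_eq_zero_right this
end

section
/- Let S ⊆ ℕ^d be a C-semigroup with cone(S) ∩ ℕ^d = ℕ^d, let ≺ be a term order on ℕ^d, and let F = F(S)_≺ = max_≺ H(S). Then S is ≺-symmetric (i.e., PF(S) = {F}) if and only if |H(S)| = |{ g ∈ S : g ≤_c F }|, where ≤_c denotes the componentwise partial order on ℕ^d. -/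
open Finset BigOperators

/-- Any finite nonempty set has a `τ`-maximal element. -/
lemma TermOrder.exists_max {d : ℕ} (τ : TermOrder d) (t : Finset (Fin d → ℕ)) :
    t.Nonempty → ∃ x ∈ t, ∀ y ∈ t, ¬ τ.lt x y := by
  classical
  induction t using Finset.cons_induction with
  | empty => intro h; simp at h
  | @cons a s ha ih =>
    intro _
    rcases s.eq_empty_or_nonempty with rfl | hs
    · refine ⟨a, by simp, ?_⟩
      intro y hy
      simp only [Finset.mem_cons, Finset.notMem_empty, or_false] at hy
      subst hy; first | exact τ.irrefl a | exact τ.irrefl y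
    · obtain ⟨m, hm, hmax⟩ := ih hs
      rcases τ.total a m with rfl | h1 | h1
      · exact ⟨a, Finset.mem_cons_of_mem hm, fun y hy => by
          rcases Finset.mem_cons.mp hy with rfl | hy
          · exact τ.irrefl y
          · exact hmax y hy⟩
      · refine ⟨m, Finset.mem_cons_of_mem hm, fun y hy => ?_⟩
        rcases Finset.mem_cons.mp hy with rfl | hy
        · intro h2; exact τ.irrefl m (τ.trans h2 h1)
        · exact hmax y hy
      · refine ⟨a, Finset.mem_cons_self a s, fun y hy => ?_⟩
        rcases Finset.mem_cons.mp hy with rfl | hy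
        · exact τ.irrefl y
        · intro h2; exact hmax y hy (τ.trans h1 h2)

/-- With full cone, `HSet S` is just the complement of `S`. -/
lemma mem_HSet_iff {d : ℕ} {S : AddSubmonoid (Fin d → ℕ)}
    (hcone : ∀ x : Fin d → ℕ, natToQ x ∈ cone S) (x : Fin d → ℕ) :
    x ∈ HSet S ↔ x ∉ S := ⟨fun h => h.2, fun h => ⟨hcone x, h⟩⟩

/-- Key characterization: `PF S = {F}` iff every gap `h` satisfies `h ≤ F` and
`F - h ∈ S`. -/
lemma pf_eq_singleton_iff {d : ℕ} (S : AddSubmonoid (Fin d → ℕ))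
    (hfin : (HSet S).Finite)
    (hcone : ∀ x : Fin d → ℕ, natToQ x ∈ cone S)
    (τ : TermOrder d) (F : Fin d → ℕ) (hF : IsFrob τ S F) :
    PF S = {F} ↔ ∀ h ∈ HSet S, h ≤ F ∧ F - h ∈ S := by
  classical
  constructor
  · intro hPF h hh
    -- consider the set of gaps of the form h + s, s ∈ S
    set T : Set (Fin d → ℕ) := {x | x ∈ HSet S ∧ ∃ s ∈ S, x = h + s} with hT
    have hTfin : T.Finite := hfin.subset (fun x hx => hx.1)
    have hTne : T.Nonempty := ⟨h, hh, 0, S.zero_mem, by simp⟩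
    obtain ⟨x, hxT, hxmax⟩ := τ.exists_max hTfin.toFinset
      (by rwa [Set.Finite.toFinset_nonempty])
    rw [Set.Finite.mem_toFinset] at hxT
    obtain ⟨hxH, s₀, hs₀, rfl⟩ := hxT
    have hxPF : h + s₀ ∈ PF S := by
      refine ⟨hxH, fun s hs hsne => ?_⟩
      by_contra hns
      have hmem : h + s₀ + s ∈ T :=
        ⟨(mem_HSet_iff hcone _).mpr hns, s₀ + s, S.add_mem hs₀ hs, by ring⟩
      refine hxmax _ (hTfin.mem_toFinset.mpr hmem) ?_
      have := τ.add_compat (h + s₀) (τ.zero_lt s hsne)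
      rwa [zero_add, add_comm s] at this
    have hxF : h + s₀ = F := by rw [hPF] at hxPF; exact hxPF
    constructor
    · rw [← hxF]; exact le_self_add
    · rw [← hxF, add_tsub_cancel_left]; exact hs₀
  · intro hcond
    apply Set.eq_singleton_iff_unique_mem.mpr
    constructor
    · refine ⟨hF.1, fun s hs hsne => ?_⟩
      by_contra hns
      have hgap : F + s ∈ HSet S := (mem_HSet_iff hcone _).mpr hns
      have hle : F + s ≤ F := (hcond _ hgap).1
      exact hsne (le_antisymm ((add_le_iff_nonpos_right F).mp hle) zero_le)
    · intro f hf
      by_contra hne'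
      obtain ⟨hfle, hfs⟩ := hcond f hf.1
      have hFne : F - f ≠ 0 := by
        intro h0
        exact hne' (le_antisymm hfle (tsub_eq_zero_iff_le.mp h0))
      have := hf.2 (F - f) hfs hFne
      rw [add_comm, tsub_add_cancel_of_le hfle] at this
      exact hF.1.2 this

/-- Counting characterization of `≺`-symmetric `C`-semigroups with
`cone(S) ∩ ℕ^d = ℕ^d`; here `≤` is the componentwise order on `ℕ^d`. -/
theorem precSymmetric_iff_card {d : ℕ} (S : AddSubmonoid (Fin d → ℕ)) (hFG : S.FG)
    (hfin : (HSet S).Finite) (hne : (HSet S).Nonempty)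
    (hcone : ∀ x : Fin d → ℕ, natToQ x ∈ cone S)
    (τ : TermOrder d) (F : Fin d → ℕ) (hF : IsFrob τ S F) :
    PF S = {F} ↔ (HSet S).ncard = { g | g ∈ S ∧ g ≤ F }.ncard := by
  classical
  set G : Set (Fin d → ℕ) := { g | g ∈ S ∧ g ≤ F } with hG
  have hImg : ∀ g ∈ G, F - g ∈ HSet S := by
    rintro g ⟨hgS, hgle⟩
    refine (mem_HSet_iff hcone _).mpr (fun hmem => ?_)
    have : F ∈ S := by
      have := S.add_mem hmem hgS
      rwa [tsub_add_cancel_of_le hgle] at this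
    exact hF.1.2 this
  have hInj : Set.InjOn (fun g => F - g) G := by
    rintro g₁ ⟨_, h₁⟩ g₂ ⟨_, h₂⟩ heq
    have heq' : F - g₁ = F - g₂ := heq
    have : F - (F - g₁) = F - (F - g₂) := by rw [heq']
    rwa [tsub_tsub_cancel_of_le h₁, tsub_tsub_cancel_of_le h₂] at this
  have hsub : (fun g => F - g) '' G ⊆ HSet S := by
    rintro _ ⟨g, hg, rfl⟩; exact hImg g hg
  have hIcard : ((fun g => F - g) '' G).ncard = G.ncard :=
    Set.ncard_image_of_injOn hInj
  constructor
  · intro hPF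
    have hcond := (pf_eq_singleton_iff S hfin hcone τ F hF).mp hPF
    have hEq : (fun g => F - g) '' G = HSet S := by
      refine Set.Subset.antisymm hsub (fun h hh => ?_)
      obtain ⟨hle, hFs⟩ := hcond h hh
      exact ⟨F - h, ⟨hFs, tsub_le_self⟩, tsub_tsub_cancel_of_le hle⟩
    rw [← hEq, hIcard]
  · intro hcard
    have hEq : (fun g => F - g) '' G = HSet S :=
      Set.eq_of_subset_of_ncard_le hsub (by rw [hIcard, ← hcard]) hfin
    refine (pf_eq_singleton_iff S hfin hcone τ F hF).mpr (fun h hh => ?_)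
    rw [← hEq] at hh
    obtain ⟨g, ⟨hgS, hgle⟩, rfl⟩ := hh
    exact ⟨tsub_le_self, by rwa [tsub_tsub_cancel_of_le hgle]⟩
end

section
/- Let S ⊆ ℕ^d be a C-semigroup with cone(S) ∩ ℕ^d = ℕ^d, let ≺ be a term order on ℕ^d, and let F = F(S)_≺ = max_≺ H(S). Then S is ≺-pseudo-symmetric (i.e., F has all coordinates even and PF(S) = {F, F/2}) if and only if F has all coordinates even and |H(S) \ {F/2}| = |{ g ∈ S : g ≤_c F }|, where ≤_c denotes the componentwise partial order on ℕ^d. -/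
open Finset BigOperators

section AuxPS

variable {d : ℕ}

lemma mem_HSet_of_not_mem {S : AddSubmonoid (Fin d → ℕ)}
    (hcone : ∀ x : Fin d → ℕ, natToQ x ∈ cone S) {x : Fin d → ℕ} (hx : x ∉ S) :
    x ∈ HSet S := ⟨hcone x, hx⟩

lemma frob_mem_PF {S : AddSubmonoid (Fin d → ℕ)} (τ : TermOrder d) {F : Fin d → ℕ}
    (hcone : ∀ x : Fin d → ℕ, natToQ x ∈ cone S) (hF : IsFrob τ S F) : F ∈ PF S := by
  refine ⟨hF.1, fun s hs hs0 => ?_⟩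
  by_contra hFs
  have hmem : F + s ∈ HSet S := mem_HSet_of_not_mem hcone hFs
  have hne : F + s ≠ F := by
    intro h
    apply hs0
    funext i
    have := congrFun h i
    simp only [Pi.add_apply] at this
    simp only [Pi.zero_apply]
    omega
  have h1 := hF.2 _ hmem hne
  have h2 : τ.lt F (F + s) := by
    have := τ.add_compat F (τ.zero_lt s hs0)
    rwa [zero_add, add_comm] at this
  exact τ.irrefl F (τ.trans h2 h1)

open Classical in
lemma chain_to_PF {S : AddSubmonoid (Fin d → ℕ)} (τ : TermOrder d)
    (hcone : ∀ x : Fin d → ℕ, natToQ x ∈ cone S) (hfin : (HSet S).Finite) :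
    ∀ n : ℕ, ∀ h ∈ HSet S, (hfin.toFinset.filter (fun x => τ.lt h x)).card ≤ n →
      ∃ s ∈ S, h + s ∈ PF S := by
  intro n
  induction n with
  | zero =>
    intro h hh hcard
    by_cases hpf : h ∈ PF S
    · exact ⟨0, S.zero_mem, by simpa using hpf⟩
    · exfalso
      rw [PF, Set.mem_setOf_eq, not_and] at hpf
      have := hpf hh
      push_neg at this
      obtain ⟨s, hs, hs0, hns⟩ := this
      have hmem : h + s ∈ HSet S := mem_HSet_of_not_mem hcone hns
      have hlt : τ.lt h (h + s) := by
        have := τ.add_compat h (τ.zero_lt s hs0)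
        rwa [zero_add, add_comm] at this
      have hin : h + s ∈ hfin.toFinset.filter (fun x => τ.lt h x) := by
        simp only [Finset.mem_filter, Set.Finite.mem_toFinset]
        exact ⟨hmem, hlt⟩
      have := Finset.card_pos.mpr ⟨_, hin⟩
      omega
  | succ n ih =>
    intro h hh hcard
    by_cases hpf : h ∈ PF S
    · exact ⟨0, S.zero_mem, by simpa using hpf⟩
    · rw [PF, Set.mem_setOf_eq, not_and] at hpf
      have := hpf hh
      push_neg at this
      obtain ⟨s, hs, hs0, hns⟩ := this
      have hmem : h + s ∈ HSet S := mem_HSet_of_not_mem hcone hns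
      have hlt : τ.lt h (h + s) := by
        have := τ.add_compat h (τ.zero_lt s hs0)
        rwa [zero_add, add_comm] at this
      have hin : h + s ∈ hfin.toFinset.filter (fun x => τ.lt h x) := by
        simp only [Finset.mem_filter, Set.Finite.mem_toFinset]
        exact ⟨hmem, hlt⟩
      have hsub : hfin.toFinset.filter (fun x => τ.lt (h + s) x) ⊆
          (hfin.toFinset.filter (fun x => τ.lt h x)).erase (h + s) := by
        intro x hx
        simp only [Finset.mem_filter, Set.Finite.mem_toFinset] at hx
        refine Finset.mem_erase.mpr ⟨?_, ?_⟩
        · rintro rfl; exact τ.irrefl _ hx.2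
        · simp only [Finset.mem_filter, Set.Finite.mem_toFinset]
          exact ⟨hx.1, τ.trans hlt hx.2⟩
      have hcard' : (hfin.toFinset.filter (fun x => τ.lt (h + s) x)).card ≤ n := by
        have h1 := Finset.card_le_card hsub
        rw [Finset.card_erase_of_mem hin] at h1
        have h2 := Finset.card_pos.mpr ⟨_, hin⟩
        omega
      obtain ⟨s', hs', hpf'⟩ := ih (h + s) hmem hcard'
      exact ⟨s + s', S.add_mem hs hs', by rwa [← add_assoc]⟩

end AuxPS

/-- Counting characterization of `≺`-pseudo-symmetric `C`-semigroups
with `cone(S) ∩ ℕ^d = ℕ^d`; here `≤` is the componentwise order on `ℕ^d`. -/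
theorem precPseudoSymmetric_iff_card {d : ℕ} (S : AddSubmonoid (Fin d → ℕ)) (hFG : S.FG)
    (hfin : (HSet S).Finite) (hne : (HSet S).Nonempty)
    (hcone : ∀ x : Fin d → ℕ, natToQ x ∈ cone S)
    (τ : TermOrder d) (F : Fin d → ℕ) (hF : IsFrob τ S F) :
    ((∀ i, Even (F i)) ∧ PF S = {F, fun i => F i / 2}) ↔
      ((∀ i, Even (F i)) ∧
        ((HSet S) \ {fun i => F i / 2}).ncard = { g | g ∈ S ∧ g ≤ F }.ncard) := by
  set F2 : Fin d → ℕ := (fun i => F i / 2) with hF2def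
  obtain ⟨hFcone, hFnS⟩ := hF.1
  constructor
  · rintro ⟨heven, hPF⟩
    refine ⟨heven, ?_⟩
    have hF2F : F2 + F2 = F := by
      funext i
      obtain ⟨k, hk⟩ := heven i
      simp only [Pi.add_apply, hF2def]
      omega
    have hF2PF : F2 ∈ PF S := by rw [hPF]; right; rfl
    obtain ⟨⟨hF2cone, hF2nS⟩, hF2add⟩ := hF2PF
    have key : ∀ h ∈ HSet S, h ≠ F2 → ∃ s ∈ S, h + s = F := by
      intro h hh hne
      obtain ⟨s, hs, hpf⟩ := chain_to_PF τ hcone hfin _ h hh le_rfl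
      rw [hPF] at hpf
      simp only [Set.mem_insert_iff, Set.mem_singleton_iff] at hpf
      rcases hpf with h1 | h1
      · exact ⟨s, hs, h1⟩
      · have hs0 : s ≠ 0 := by
          rintro rfl
          rw [add_zero] at h1
          exact hne h1
        have hmem : F2 + s ∈ S := hF2add s hs hs0
        refine ⟨s + F2, by rwa [add_comm] at hmem, ?_⟩
        rw [← add_assoc, h1, hF2F]
    have hbij : Set.BijOn (fun h => F - h) (HSet S \ {F2}) {g | g ∈ S ∧ g ≤ F} := by
      refine ⟨?_, ?_, ?_⟩
      · rintro h ⟨hh, hne⟩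
        obtain ⟨s, hs, hsum⟩ := key h hh (by simpa using hne)
        have hFh : F - h = s := by
          funext i
          have := congrFun hsum i
          simp only [Pi.add_apply] at this
          simp only [Pi.sub_apply]
          omega
        refine ⟨?_, fun i => Nat.sub_le _ _⟩
        show F - h ∈ S
        rw [hFh]; exact hs
      · rintro h1 ⟨hh1, hne1⟩ h2 ⟨hh2, hne2⟩ heq
        obtain ⟨s1, _, hsum1⟩ := key h1 hh1 (by simpa using hne1)
        obtain ⟨s2, _, hsum2⟩ := key h2 hh2 (by simpa using hne2)
        funext i
        have e1 := congrFun hsum1 i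
        have e2 := congrFun hsum2 i
        have e3 := congrFun heq i
        simp only [Pi.add_apply] at e1 e2
        simp only [Pi.sub_apply] at e3
        omega
      · rintro g ⟨hg, hgF⟩
        have hsum : (F - g) + g = F := by
          funext i
          have hgFi : g i ≤ F i := hgF i
          simp only [Pi.add_apply, Pi.sub_apply]
          omega
        have hFg : F - g ∉ S := fun hmem => hFnS (hsum ▸ S.add_mem hmem hg)
        have hne : F - g ≠ F2 := by
          intro h
          apply hF2nS
          have hgeq : g = F2 := by
            funext i
            have h1 := congrFun h i
            have h2 : g i ≤ F i := hgF i
            obtain ⟨k, hk⟩ := heven i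
            simp only [Pi.sub_apply, hF2def] at h1 ⊢
            omega
          exact hgeq ▸ hg
        refine ⟨F - g, ⟨mem_HSet_of_not_mem hcone hFg, hne⟩, ?_⟩
        funext i
        have hgFi : g i ≤ F i := hgF i
        simp only [Pi.sub_apply]
        omega
    calc (HSet S \ {F2}).ncard
        = ((fun h => F - h) '' (HSet S \ {F2})).ncard :=
          (Set.ncard_image_of_injOn hbij.injOn).symm
      _ = { g | g ∈ S ∧ g ≤ F }.ncard := by rw [hbij.image_eq]
  · rintro ⟨heven, hcard⟩
    refine ⟨heven, ?_⟩
    have hF2F : F2 + F2 = F := by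
      funext i
      obtain ⟨k, hk⟩ := heven i
      simp only [Pi.add_apply, hF2def]
      omega
    have hF2nS : F2 ∉ S := fun h => hFnS (hF2F ▸ S.add_mem h h)
    have hTfin : { g | g ∈ S ∧ g ≤ F }.Finite :=
      (Set.finite_Iic F).subset (fun g hg => hg.2)
    have hAfin : (HSet S \ {F2}).Finite := hfin.diff
    have hinj : Set.InjOn (fun g => F - g) { g | g ∈ S ∧ g ≤ F } := by
      rintro g1 ⟨_, hg1F⟩ g2 ⟨_, hg2F⟩ heq
      funext i
      have e1 : g1 i ≤ F i := hg1F i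
      have e2 : g2 i ≤ F i := hg2F i
      have e3 := congrFun heq i
      simp only [Pi.sub_apply] at e3
      omega
    have himg : (fun g => F - g) '' { g | g ∈ S ∧ g ≤ F } = HSet S \ {F2} := by
      apply Set.eq_of_subset_of_ncard_le
      · rintro x ⟨g, ⟨hg, hgF⟩, rfl⟩
        have hsum : (F - g) + g = F := by
          funext i
          have hgFi : g i ≤ F i := hgF i
          simp only [Pi.add_apply, Pi.sub_apply]
          omega
        have hFg : F - g ∉ S := fun hmem => hFnS (hsum ▸ S.add_mem hmem hg)
        refine ⟨mem_HSet_of_not_mem hcone hFg, ?_⟩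
        simp only [Set.mem_singleton_iff]
        intro h
        apply hF2nS
        have hgeq : g = F2 := by
          funext i
          have h1 := congrFun h i
          have h2 : g i ≤ F i := hgF i
          obtain ⟨k, hk⟩ := heven i
          simp only [Pi.sub_apply, hF2def] at h1 ⊢
          omega
        exact hgeq ▸ hg
      · rw [Set.ncard_image_of_injOn hinj, ← hcard]
      · exact hAfin
    have key : ∀ h ∈ HSet S, h ≠ F2 → ∃ g ∈ S, g ≤ F ∧ g + h = F := by
      intro h hh hne
      have hmem : h ∈ HSet S \ {F2} := ⟨hh, by simpa using hne⟩
      rw [← himg] at hmem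
      obtain ⟨g, ⟨hgS, hgF⟩, hEq⟩ := hmem
      refine ⟨g, hgS, hgF, ?_⟩
      funext i
      have e := congrFun hEq i
      have hgFi : g i ≤ F i := hgF i
      simp only [Pi.sub_apply] at e
      simp only [Pi.add_apply]
      omega
    have hFPF : F ∈ PF S := frob_mem_PF τ hcone hF
    have hF2PF : F2 ∈ PF S := by
      refine ⟨mem_HSet_of_not_mem hcone hF2nS, fun s hs hs0 => ?_⟩
      by_contra hns
      have hmem : F2 + s ∈ HSet S := mem_HSet_of_not_mem hcone hns
      have hne : F2 + s ≠ F2 := by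
        intro h
        apply hs0
        funext i
        have := congrFun h i
        simp only [Pi.add_apply] at this
        simp only [Pi.zero_apply]
        omega
      obtain ⟨g, hgS, hgF, hsum⟩ := key _ hmem hne
      have hgs : g + s = F2 := by
        funext i
        have e1 := congrFun hsum i
        have e2 := congrFun hF2F i
        simp only [Pi.add_apply] at e1 e2 ⊢
        omega
      exact hF2nS (hgs ▸ S.add_mem hgS hs)
    ext f
    simp only [Set.mem_insert_iff, Set.mem_singleton_iff]
    constructor
    · intro hfPF
      obtain ⟨hfH, hfadd⟩ := hfPF
      by_contra hcontra
      push_neg at hcontra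
      obtain ⟨hneF, hneF2⟩ := hcontra
      obtain ⟨g, hgS, hgF, hsum⟩ := key f hfH hneF2
      have hg0 : g ≠ 0 := by
        rintro rfl
        rw [zero_add] at hsum
        exact hneF hsum
      have hfg : f + g ∈ S := hfadd g hgS hg0
      rw [add_comm] at hsum
      exact absurd (hsum ▸ hfg) hFnS
    · rintro (rfl | rfl)
      · exact hFPF
      · exact hF2PF
end

section
/- Let S ⊆ ℕ^d, d > 1, be a C-semigroup with cone(S) ∩ ℕ^d = ℕ^d whose minimal generating set has cardinality e(S) ≥ 3 (as holds for every MPD-semigroup in ℕ^d with d ≥ 2). If S is ≺-symmetric or ≺-pseudo-symmetric with respect to a term order ≺, then the extended Wilf inequality holds: |{ g ∈ S : g ≺ F(S)_≺ }| · e(S) ≥ |H(S)| + |{ g ∈ S : g ≺ F(S)_≺ }| + 1. -/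
open Finset BigOperators

section WilfAux

private lemma finset_tau_max {d : ℕ} (τ : TermOrder d) :
    ∀ s : Finset (Fin d → ℕ), s.Nonempty → ∃ t ∈ s, ∀ x ∈ s, x ≠ t → τ.lt x t := by
  classical
  intro s
  induction s using Finset.induction_on with
  | empty => intro h; exact absurd h (by simp)
  | @insert a s ha ih =>
    intro _
    by_cases hs : s.Nonempty
    · obtain ⟨t, ht, hmax⟩ := ih hs
      rcases τ.total a t with h | h | h
      · subst h
        exact ⟨a, Finset.mem_insert_self _ _,
          fun x hx hxa => hmax x ((Finset.mem_insert.mp hx).resolve_left hxa) hxa⟩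
      · refine ⟨t, Finset.mem_insert_of_mem ht, fun x hx hxt => ?_⟩
        rcases Finset.mem_insert.mp hx with rfl | hxs
        · exact h
        · exact hmax x hxs hxt
      · refine ⟨a, Finset.mem_insert_self _ _, fun x hx hxa => ?_⟩
        rcases Finset.mem_insert.mp hx with rfl | hxs
        · exact absurd rfl hxa
        · by_cases hxt : x = t
          · exact hxt ▸ h
          · exact τ.trans (hmax x hxs hxt) h
    · rw [Finset.not_nonempty_iff_eq_empty] at hs
      subst hs
      refine ⟨a, Finset.mem_insert_self _ _, fun x hx hxa => ?_⟩
      simp only [Finset.mem_insert, Finset.notMem_empty, or_false] at hx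
      exact absurd hx hxa

private lemma exists_tau_max {d : ℕ} (τ : TermOrder d) {T : Set (Fin d → ℕ)}
    (hfinT : T.Finite) (hneT : T.Nonempty) :
    ∃ t ∈ T, ∀ x ∈ T, x ≠ t → τ.lt x t := by
  obtain ⟨s, rfl⟩ := hfinT.exists_finset_coe
  obtain ⟨t, ht, h⟩ := finset_tau_max τ s (by exact_mod_cast hneT)
  exact ⟨t, ht, fun x hx => h x hx⟩

private lemma exists_pf_add {d : ℕ} (S : AddSubmonoid (Fin d → ℕ)) (hfin : (HSet S).Finite)
    (hcone : ∀ x : Fin d → ℕ, natToQ x ∈ cone S) (τ : TermOrder d)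
    {h : Fin d → ℕ} (hh : h ∈ HSet S) :
    ∃ s ∈ S, ∃ f ∈ PF S, h + s = f := by
  set T : Set (Fin d → ℕ) := {t | t ∈ HSet S ∧ ∃ s ∈ S, h + s = t} with hT
  have hTfin : T.Finite := hfin.subset (fun t ht => ht.1)
  have hTne : T.Nonempty := ⟨h, hh, 0, S.zero_mem, add_zero h⟩
  obtain ⟨t, htT, hmax⟩ := exists_tau_max τ hTfin hTne
  obtain ⟨htH, s, hs, hts⟩ := htT
  refine ⟨s, hs, t, ⟨htH, ?_⟩, hts⟩
  intro u hu hu0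
  by_contra hnot
  have htu : t + u ∈ HSet S := ⟨hcone _, hnot⟩
  have hmem : t + u ∈ T := ⟨htu, s + u, S.add_mem hs hu, by rw [← add_assoc, hts]⟩
  have hne' : t + u ≠ t := fun hc => hu0 (add_eq_left.mp hc)
  have h1 := hmax _ hmem hne'
  have h2 : τ.lt t (t + u) := by
    have := τ.add_compat t (τ.zero_lt u hu0)
    rw [zero_add, add_comm] at this
    exact this
  exact τ.irrefl t (τ.trans h2 h1)

private lemma ncard_le_small {d : ℕ} (S : AddSubmonoid (Fin d → ℕ)) (τ : TermOrder d)
    (F : Fin d → ℕ) (hsmall : { g | g ∈ S ∧ τ.lt g F }.Finite)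
    {T : Set (Fin d → ℕ)} (hT : ∀ h ∈ T, h ∉ S)
    (key : ∀ h ∈ T, ∃ s ∈ S, h + s = F) :
    T.ncard ≤ { g | g ∈ S ∧ τ.lt g F }.ncard := by
  classical
  set φ : (Fin d → ℕ) → (Fin d → ℕ) :=
    fun h => if hh : ∃ s ∈ S, h + s = F then hh.choose else 0 with hφ
  have hspec : ∀ h ∈ T, φ h ∈ S ∧ h + φ h = F := by
    intro h hh
    have hex := key h hh
    simp only [hφ, dif_pos hex]
    exact ⟨hex.choose_spec.1, hex.choose_spec.2⟩
  apply Set.ncard_le_ncard_of_injOn φ ?_ ?_ hsmall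
  · intro h hh
    obtain ⟨h1, h2⟩ := hspec h hh
    refine ⟨h1, ?_⟩
    have hne : h ≠ 0 := fun h0 => hT h hh (h0 ▸ S.zero_mem)
    have hlt := τ.add_compat (φ h) (τ.zero_lt h hne)
    rw [zero_add] at hlt
    rwa [h2] at hlt
  · intro h1 hh1 h2 hh2 heq
    have e1 := (hspec h1 hh1).2
    have e2 := (hspec h2 hh2).2
    rw [heq] at e1
    exact add_right_cancel (e1.trans e2.symm)

private lemma atom_mem_range {d n : ℕ} {S : AddSubmonoid (Fin d → ℕ)} {a : Fin n → Fin d → ℕ}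
    (hmin : MinGen a S) {x : Fin d → ℕ} (hxS : x ∈ S) (hx0 : x ≠ 0)
    (hatom : ∀ y ∈ S, ∀ z ∈ S, y ≠ 0 → z ≠ 0 → y + z ≠ x) : x ∈ Set.range a := by
  obtain ⟨hinj, hcl, hminimal⟩ := hmin
  have hge : ∀ k, a k ≠ 0 := by
    intro k hk
    apply hminimal (a k) ⟨k, rfl⟩
    rw [hk]
    exact zero_mem _
  have hrange : ∀ y ∈ Set.range a, y ∈ S := by
    intro y hy
    rw [← hcl]
    exact AddSubmonoid.subset_closure hy
  have hx' : x ∈ AddSubmonoid.closure (Set.range a) := by rw [hcl]; exact hxS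
  obtain ⟨l, hl, hsum⟩ := AddSubmonoid.exists_multiset_of_mem_closure hx'
  rcases eq_or_ne l 0 with rfl | hl0
  · exact absurd hsum.symm (by simpa using hx0)
  · obtain ⟨y, hy⟩ := Multiset.exists_mem_of_ne_zero hl0
    obtain ⟨t, rfl⟩ := Multiset.exists_cons_of_mem hy
    rw [Multiset.sum_cons] at hsum
    have hyA : y ∈ Set.range a := hl y (Multiset.mem_cons_self _ _)
    have htS : t.sum ∈ S :=
      AddSubmonoid.multiset_sum_mem S t
        (fun z hz => hrange z (hl z (Multiset.mem_cons_of_mem hz)))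
    rcases eq_or_ne t.sum 0 with h0 | h0
    · rw [h0, add_zero] at hsum
      rwa [← hsum]
    · have hy0 : y ≠ 0 := by
        obtain ⟨k, hk⟩ := hyA
        rw [← hk]; exact hge k
      exact absurd hsum (hatom y (hrange y hyA) t.sum htS hy0 h0)

private lemma units_gen {d : ℕ} (S : AddSubmonoid (Fin d → ℕ))
    (hu : ∀ i : Fin d, Pi.single i 1 ∈ S) : ∀ x : Fin d → ℕ, x ∈ S := by
  intro x
  have hx : x = ∑ c : Fin d, x c • Pi.single c (1 : ℕ) := by
    funext e
    rw [Finset.sum_apply]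
    simp [Pi.single_apply]
  rw [hx]
  exact AddSubmonoid.sum_mem S (fun c _ => AddSubmonoid.nsmul_mem S (hu c) (x c))

end WilfAux
/-- `≺`-symmetric and `≺`-pseudo-symmetric `C`-semigroups with
`cone(S) ∩ ℕ^d = ℕ^d`, `d > 1` and embedding dimension `e(S) = n ≥ 3` satisfy the
extended Wilf inequality. -/
theorem extended_wilf {d n : ℕ} (hd : 1 < d) (hn : 3 ≤ n)
    (S : AddSubmonoid (Fin d → ℕ)) (a : Fin n → Fin d → ℕ) (hmin : MinGen a S)
    (hfin : (HSet S).Finite) (hne : (HSet S).Nonempty)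
    (hcone : ∀ x : Fin d → ℕ, natToQ x ∈ cone S)
    (τ : TermOrder d) (F : Fin d → ℕ) (hF : IsFrob τ S F)
    (hsym : PF S = {F} ∨ ((∀ i, Even (F i)) ∧ PF S = {F, fun i => F i / 2}))
    (hsmall : { g | g ∈ S ∧ τ.lt g F }.Finite) :
    { g | g ∈ S ∧ τ.lt g F }.ncard * n ≥
      (HSet S).ncard + { g | g ∈ S ∧ τ.lt g F }.ncard + 1 := by
  classical
  have hFH : F ∈ HSet S := hF.1
  have hFnS : F ∉ S := hFH.2
  have hF0 : F ≠ 0 := fun h => hFnS (h ▸ S.zero_mem)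
  have h0Sm : (0 : Fin d → ℕ) ∈ { g | g ∈ S ∧ τ.lt g F } := ⟨S.zero_mem, τ.zero_lt F hF0⟩
  have hN1 : 1 ≤ { g | g ∈ S ∧ τ.lt g F }.ncard := (Set.ncard_pos hsmall).mpr ⟨0, h0Sm⟩
  rcases hsym with hPF | ⟨hev, hPF⟩
  · -- symmetric case
    have key : ∀ h ∈ HSet S, ∃ s ∈ S, h + s = F := by
      intro h hh
      obtain ⟨s, hs, f, hf, hsf⟩ := exists_pf_add S hfin hcone τ hh
      rw [hPF, Set.mem_singleton_iff] at hf
      exact ⟨s, hs, hf ▸ hsf⟩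
    have hinj := ncard_le_small S τ F hsmall (fun h hh => hh.2) key
    have hH1 : 1 ≤ (HSet S).ncard := (Set.ncard_pos hfin).mpr hne
    have hlin : (HSet S).ncard + { g | g ∈ S ∧ τ.lt g F }.ncard + 1 ≤
        { g | g ∈ S ∧ τ.lt g F }.ncard * 3 := by omega
    exact le_trans hlin (Nat.mul_le_mul_left _ hn)
  · -- pseudo-symmetric case
    set m : Fin d → ℕ := fun i => F i / 2 with hm
    have hmm : m + m = F := by
      funext i
      have he := hev i
      obtain ⟨k, hk⟩ := he
      show F i / 2 + F i / 2 = F i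
      omega
    have hmPF : m ∈ PF S := by rw [hPF]; exact Set.mem_insert_iff.mpr (Or.inr rfl)
    have hmH : m ∈ HSet S := hmPF.1
    have hmnS : m ∉ S := hmH.2
    have hmF : m ≠ F := by
      intro h
      have h2 : m + m = m := by rw [hmm, ← h]
      have h3 : m = 0 := by
        funext c
        have h4 : m c + m c = m c := congrFun h2 c
        show m c = 0
        omega
      exact hF0 (by rw [← h, h3])
    have key2 : ∀ h ∈ HSet S, h ≠ m → ∃ s ∈ S, h + s = F := by
      intro h hh hhm
      obtain ⟨s, hs, f, hf, hsf⟩ := exists_pf_add S hfin hcone τ hh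
      rw [hPF] at hf
      rcases Set.mem_insert_iff.mp hf with rfl | hfm
      · exact ⟨s, hs, hsf⟩
      · rw [Set.mem_singleton_iff] at hfm
        subst hfm
        have hs0 : s ≠ 0 := by
          intro h0
          rw [h0, add_zero] at hsf
          exact hhm hsf
        have hms : m + s ∈ S := hmPF.2 s hs hs0
        exact ⟨m + s, hms, by rw [add_left_comm, hsf, hmm]⟩
    have hinj2 := ncard_le_small S τ F hsmall (T := HSet S \ {m})
      (fun h hh => hh.1.2) (fun h hh => key2 h hh.1 (by simpa using hh.2))
    have hHle : (HSet S).ncard ≤ (HSet S \ {m}).ncard + 1 := by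
      have hsub : HSet S ⊆ (HSet S \ {m}) ∪ {m} := by
        intro x hx
        by_cases hxm : x = m
        · exact Or.inr hxm
        · exact Or.inl ⟨hx, hxm⟩
      calc (HSet S).ncard ≤ ((HSet S \ {m}) ∪ {m}).ncard :=
            Set.ncard_le_ncard hsub ((hfin.diff).union (Set.finite_singleton m))
        _ ≤ (HSet S \ {m}).ncard + ({m} : Set (Fin d → ℕ)).ncard := Set.ncard_union_le _ _
        _ = (HSet S \ {m}).ncard + 1 := by rw [Set.ncard_singleton]
    by_cases hN2 : 2 ≤ { g | g ∈ S ∧ τ.lt g F }.ncard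
    · have hlin : (HSet S).ncard + { g | g ∈ S ∧ τ.lt g F }.ncard + 1 ≤
          { g | g ∈ S ∧ τ.lt g F }.ncard * 3 := by omega
      exact le_trans hlin (Nat.mul_le_mul_left _ hn)
    · -- degenerate case: exactly one small element
      have hNeq : { g | g ∈ S ∧ τ.lt g F }.ncard = 1 := by omega
      have hFH' : F ∈ HSet S \ {m} := ⟨hFH, by simpa using (Ne.symm hmF)⟩
      have hH'fin : (HSet S \ {m}).Finite := hfin.diff
      have hH'card : (HSet S \ {m}).ncard = 1 :=
        le_antisymm (hinj2.trans (le_of_eq hNeq)) ((Set.ncard_pos hH'fin).mpr ⟨F, hFH'⟩)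
      obtain ⟨y, hy⟩ := Set.ncard_eq_one.mp hH'card
      have hyF : y = F := by
        rw [hy] at hFH'
        exact hFH'.symm
      rw [hyF] at hy
      have hcompl : ∀ x : Fin d → ℕ, x ∉ S → x = F ∨ x = m := by
        intro x hx
        by_cases hxm : x = m
        · exact Or.inr hxm
        · left
          have hmem : x ∈ HSet S \ {m} := ⟨⟨hcone x, hx⟩, hxm⟩
          rw [hy] at hmem
          exact hmem
      have hunit : ∃ i : Fin d, Pi.single i 1 ∉ S := by
        by_contra hcon
        push_neg at hcon
        exact hFnS (units_gen S hcon F)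
      obtain ⟨i, hi⟩ := hunit
      have him : m = Pi.single i 1 := by
        rcases hcompl _ hi with h1 | h1
        · exfalso
          have he := hev i
          rw [← h1] at he
          simp at he
        · exact h1.symm
      have hF2 : F = Pi.single i 2 := by
        rw [← hmm, him]
        funext c
        by_cases hc : c = i
        · subst hc; simp
        · simp [Pi.single_eq_of_ne hc]
      have hSmem : ∀ x : Fin d → ℕ, x ∈ S ↔ x ≠ Pi.single i 1 ∧ x ≠ Pi.single i 2 := by
        intro x
        constructor
        · intro hx
          constructor
          · intro hx1; rw [hx1, ← him] at hx; exact hmnS hx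
          · intro hx2; rw [hx2, ← hF2] at hx; exact hFnS hx
        · rintro ⟨hx1, hx2⟩
          by_contra hx
          rcases hcompl x hx with h | h
          · exact hx2 (by rw [h, hF2])
          · exact hx1 (by rw [h, him])
      have hnt : Nontrivial (Fin d) := ⟨⟨⟨0, by omega⟩, ⟨1, by omega⟩, by simp [Fin.ext_iff]⟩⟩
      obtain ⟨j, hj⟩ := exists_ne i
      -- helpers for vectors supported on {i, j}
      have hvali : ∀ p q : ℕ, (Pi.single i p + Pi.single j q : Fin d → ℕ) i = p := by
        intro p q
        simp [Pi.single_eq_of_ne (Ne.symm hj)]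
      have hvalj : ∀ p q : ℕ, (Pi.single i p + Pi.single j q : Fin d → ℕ) j = q := by
        intro p q
        simp [Pi.single_eq_of_ne hj]
      have hsupp : ∀ v : Fin d → ℕ, (∀ c, c ≠ i → c ≠ j → v c = 0) → v j = 0 →
          v = Pi.single i (v i) := by
        intro v h0 hj0
        funext c
        by_cases hc : c = i
        · subst hc; simp
        · by_cases hc' : c = j
          · subst hc'; rw [hj0, Pi.single_eq_of_ne hc]
          · rw [h0 c hc hc', Pi.single_eq_of_ne hc]
      have hnotS : ∀ v : Fin d → ℕ, v ∈ S → (∀ c, c ≠ i → c ≠ j → v c = 0) →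
          ¬(v j = 0 ∧ (v i = 1 ∨ v i = 2)) := by
        rintro v hv h0 ⟨hj0, hcase⟩
        have hrep := hsupp v h0 hj0
        rcases hcase with h | h
        · exact ((hSmem v).mp hv).1 (by rw [hrep, h])
        · exact ((hSmem v).mp hv).2 (by rw [hrep, h])
      have hnz : ∀ v : Fin d → ℕ, (∀ c, c ≠ i → c ≠ j → v c = 0) → v ≠ 0 →
          (v i ≠ 0 ∨ v j ≠ 0) := by
        intro v h0 hv
        by_contra hcon
        push_neg at hcon
        apply hv
        funext c
        show v c = 0
        by_cases hc : c = i
        · subst hc; exact hcon.1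
        · by_cases hc' : c = j
          · subst hc'; exact hcon.2
          · exact h0 c hc hc'
      have hdecomp : ∀ (p q : ℕ) (y z : Fin d → ℕ), y ∈ S → z ∈ S → y ≠ 0 → z ≠ 0 →
          y + z = Pi.single i p + Pi.single j q →
          (y i + z i = p ∧ y j + z j = q ∧ (y i ≠ 0 ∨ y j ≠ 0) ∧ (z i ≠ 0 ∨ z j ≠ 0) ∧
           ¬(y j = 0 ∧ (y i = 1 ∨ y i = 2)) ∧ ¬(z j = 0 ∧ (z i = 1 ∨ z i = 2))) := by
        intro p q y z hyS hzS hy0 hz0 heq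
        have hc : ∀ c, y c + z c = (Pi.single i p + Pi.single j q : Fin d → ℕ) c := fun c => congrFun heq c
        have h0 : ∀ c, c ≠ i → c ≠ j → y c = 0 ∧ z c = 0 := by
          intro c hci hcj
          have h1 := hc c
          rw [show (Pi.single i p + Pi.single j q : Fin d → ℕ) c = 0 by
            simp [Pi.single_eq_of_ne hci, Pi.single_eq_of_ne hcj]] at h1
          omega
        have h0y : ∀ c, c ≠ i → c ≠ j → y c = 0 := fun c a b => (h0 c a b).1
        have h0z : ∀ c, c ≠ i → c ≠ j → z c = 0 := fun c a b => (h0 c a b).2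
        refine ⟨?_, ?_, hnz y h0y hy0, hnz z h0z hz0, hnotS y hyS h0y, hnotS z hzS h0z⟩
        · have := hc i; rwa [hvali] at this
        · have := hc j; rwa [hvalj] at this
      -- the four atoms
      have hxS : ∀ p q : ℕ, (p ≠ 1 ∧ p ≠ 2) ∨ q ≠ 0 →
          Pi.single i p + Pi.single j q ∈ S := by
        intro p q hpq
        rw [hSmem]
        constructor
        · intro h
          have h1 := congrFun h i
          have h2 := congrFun h j
          rw [hvali] at h1
          rw [hvalj, Pi.single_eq_of_ne hj] at h2
          rw [Pi.single_eq_same] at h1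
          rcases hpq with ⟨hp, _⟩ | hq
          · exact hp h1
          · exact hq h2
        · intro h
          have h1 := congrFun h i
          have h2 := congrFun h j
          rw [hvali] at h1
          rw [hvalj, Pi.single_eq_of_ne hj] at h2
          rw [Pi.single_eq_same] at h1
          rcases hpq with ⟨_, hp⟩ | hq
          · exact hp h1
          · exact hq h2
      have hxne0 : ∀ p q : ℕ, p + q ≠ 0 → Pi.single i p + Pi.single j q ≠ (0 : Fin d → ℕ) := by
        intro p q hpq h
        have h1 := congrFun h i
        have h2 := congrFun h j
        rw [hvali] at h1
        rw [hvalj] at h2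
        have h1' : p = 0 := h1
        have h2' : q = 0 := h2
        omega
      have hrange : ∀ p q : ℕ, ((p ≠ 1 ∧ p ≠ 2) ∨ q ≠ 0) → p + q ≠ 0 →
          (∀ yi yj zi zj : ℕ, yi + zi = p → yj + zj = q → (yi ≠ 0 ∨ yj ≠ 0) →
            (zi ≠ 0 ∨ zj ≠ 0) → ¬(yj = 0 ∧ (yi = 1 ∨ yi = 2)) →
            ¬(zj = 0 ∧ (zi = 1 ∨ zi = 2)) → False) →
          Pi.single i p + Pi.single j q ∈ Set.range a := by
        intro p q h1 h2 h3
        apply atom_mem_range hmin (hxS p q h1) (hxne0 p q h2)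
        intro y hyS z hzS hy0 hz0 heq
        obtain ⟨e1, e2, e3, e4, e5, e6⟩ := hdecomp p q y z hyS hzS hy0 hz0 heq
        exact h3 (y i) (y j) (z i) (z j) e1 e2 e3 e4 e5 e6
      have r1 : Pi.single i 0 + Pi.single j 1 ∈ Set.range a := by
        apply hrange 0 1 (Or.inl ⟨by omega, by omega⟩) (by omega)
        intro yi yj zi zj e1 e2 e3 e4 e5 e6
        omega
      have r2 : Pi.single i 3 + Pi.single j 0 ∈ Set.range a := by
        apply hrange 3 0 (Or.inl ⟨by omega, by omega⟩) (by omega)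
        intro yi yj zi zj e1 e2 e3 e4 e5 e6
        omega
      have r3 : Pi.single i 1 + Pi.single j 1 ∈ Set.range a := by
        apply hrange 1 1 (Or.inr (by omega)) (by omega)
        intro yi yj zi zj e1 e2 e3 e4 e5 e6
        omega
      have r4 : Pi.single i 2 + Pi.single j 1 ∈ Set.range a := by
        apply hrange 2 1 (Or.inr (by omega)) (by omega)
        intro yi yj zi zj e1 e2 e3 e4 e5 e6
        omega
      obtain ⟨k1, hk1⟩ := r1
      obtain ⟨k2, hk2⟩ := r2
      obtain ⟨k3, hk3⟩ := r3
      obtain ⟨k4, hk4⟩ := r4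
      have hxne : ∀ p q p' q' : ℕ, p ≠ p' →
          (Pi.single i p + Pi.single j q : Fin d → ℕ) ≠ Pi.single i p' + Pi.single j q' := by
        intro p q p' q' hpp h
        have h1 := congrFun h i
        rw [hvali, hvali] at h1
        exact hpp h1
      have hk12 : k1 ≠ k2 := fun h => hxne 0 1 3 0 (by omega) (by rw [← hk1, ← hk2, h])
      have hk13 : k1 ≠ k3 := fun h => hxne 0 1 1 1 (by omega) (by rw [← hk1, ← hk3, h])
      have hk14 : k1 ≠ k4 := fun h => hxne 0 1 2 1 (by omega) (by rw [← hk1, ← hk4, h])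
      have hk23 : k2 ≠ k3 := fun h => hxne 3 0 1 1 (by omega) (by rw [← hk2, ← hk3, h])
      have hk24 : k2 ≠ k4 := fun h => hxne 3 0 2 1 (by omega) (by rw [← hk2, ← hk4, h])
      have hk34 : k3 ≠ k4 := fun h => hxne 1 1 2 1 (by omega) (by rw [← hk3, ← hk4, h])
      have hcard : ({k1, k2, k3, k4} : Finset (Fin n)).card = 4 := by
        rw [Finset.card_insert_of_notMem (by simp [hk12, hk13, hk14]),
          Finset.card_insert_of_notMem (by simp [hk23, hk24]),
          Finset.card_insert_of_notMem (by simp [hk34]), Finset.card_singleton]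
      have hn4 : 4 ≤ n := by
        have hle := Finset.card_le_univ ({k1, k2, k3, k4} : Finset (Fin n))
        rwa [hcard, Fintype.card_fin] at hle
      rw [hNeq, one_mul]
      omega
end

section
/- Let S = ⟨a_1,…,a_n⟩ ⊆ ℕ^d be a C-semigroup with cone(S) ∩ ℕ^d = ℕ^d. Suppose K ∈ ℤ[t_1,…,t_d] is a polynomial satisfying the identity K = (Σ_{a∈S} t^a) · Π_{i=1}^n (1 − t^{a_i}) in the ring of formal power series ℤ[[t_1,…,t_d]]. Then for every term order ≺ on ℕ^d, the ≺-maximal exponent occurring in the support of K equals F(S)_≺ + Σ_{i=1}^n a_i. -/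
open Finset BigOperators

namespace FrobAux

variable {d n : ℕ}

lemma symm_sum_eq (b : Fin n → Fin d → ℕ) (T : Finset (Fin n)) :
    Finsupp.equivFunOnFinite.symm (∑ i ∈ T, b i) =
      ∑ i ∈ T, Finsupp.equivFunOnFinite.symm (b i) := by
  ext j
  simp [Finsupp.finset_sum_apply]

lemma prod_monomial (b : Fin n → (Fin d →₀ ℕ)) (T : Finset (Fin n)) :
    (∏ i ∈ T, MvPowerSeries.monomial (b i) (1 : ℤ)) = MvPowerSeries.monomial (∑ i ∈ T, b i) (1 : ℤ) := by
  classical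
  induction T using Finset.induction with
  | empty => simp
  | insert _ _ h ih =>
      rw [Finset.prod_insert h, ih, Finset.sum_insert h, MvPowerSeries.monomial_mul_monomial,
        one_mul]

open Classical in
lemma coeff_hilb (S : AddSubmonoid (Fin d → ℕ)) (m : Fin d →₀ ℕ) :
    MvPowerSeries.coeff m (hilbSeries S) =
      if Finsupp.equivFunOnFinite m ∈ S then 1 else 0 := by
  rw [MvPowerSeries.coeff_apply]
  simp [hilbSeries]

open Classical in
lemma coeff_hilb_prod (S : AddSubmonoid (Fin d → ℕ)) (a : Fin n → Fin d → ℕ)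
    (m : Fin d →₀ ℕ) :
    MvPowerSeries.coeff m (hilbSeries S *
        ∏ i, (1 - MvPowerSeries.monomial (Finsupp.equivFunOnFinite.symm (a i)) (1 : ℤ))) =
    ∑ T ∈ (univ : Finset (Fin n)).powerset,
      if Finsupp.equivFunOnFinite.symm (∑ i ∈ T, a i) ≤ m
          ∧ Finsupp.equivFunOnFinite (m - Finsupp.equivFunOnFinite.symm (∑ i ∈ T, a i)) ∈ S
        then (-1 : ℤ)^T.card else 0 := by
  classical
  have hprod : (∏ i, (1 - MvPowerSeries.monomial (Finsupp.equivFunOnFinite.symm (a i)) (1 : ℤ))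
        : MvPowerSeries (Fin d) ℤ)
      = ∑ T ∈ (univ : Finset (Fin n)).powerset,
          (-1 : ℤ)^T.card •
            MvPowerSeries.monomial (Finsupp.equivFunOnFinite.symm (∑ i ∈ T, a i)) (1 : ℤ) := by
    have h1 : ∀ i ∈ (univ : Finset (Fin n)),
        (1 - MvPowerSeries.monomial (Finsupp.equivFunOnFinite.symm (a i)) (1 : ℤ)
          : MvPowerSeries (Fin d) ℤ)
        = (-(MvPowerSeries.monomial (Finsupp.equivFunOnFinite.symm (a i)) (1 : ℤ))) + 1 := by
      intro i _; ring
    rw [Finset.prod_congr rfl h1, Finset.prod_add]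
    refine Finset.sum_congr rfl fun T _ => ?_
    have h2 : ∀ i ∈ T,
        (-(MvPowerSeries.monomial (Finsupp.equivFunOnFinite.symm (a i)) (1 : ℤ))
          : MvPowerSeries (Fin d) ℤ)
        = (-1) * MvPowerSeries.monomial (Finsupp.equivFunOnFinite.symm (a i)) (1 : ℤ) := by
      intro i _; ring
    rw [Finset.prod_const_one, mul_one, Finset.prod_congr rfl h2, Finset.prod_mul_distrib,
      Finset.prod_const, prod_monomial, ← symm_sum_eq]
    rw [zsmul_eq_mul]; push_cast; ring
  rw [hprod, Finset.mul_sum, map_sum]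
  refine Finset.sum_congr rfl fun T _ => ?_
  rw [mul_smul_comm, map_smul, MvPowerSeries.coeff_mul_monomial, smul_eq_mul]
  by_cases h1 : Finsupp.equivFunOnFinite.symm (∑ i ∈ T, a i) ≤ m
  · rw [if_pos h1, coeff_hilb]
    by_cases h2 : Finsupp.equivFunOnFinite (m - Finsupp.equivFunOnFinite.symm (∑ i ∈ T, a i)) ∈ S
    · rw [if_pos h2, if_pos ⟨h1, h2⟩]; ring
    · rw [if_neg h2, if_neg (by tauto)]; ring
  · rw [if_neg h1, if_neg (by tauto)]; ring

/-- Weak inequality `x ⪯ y` associated to a term order. -/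
def Tle (τ : TermOrder d) (x y : Fin d → ℕ) : Prop := x = y ∨ τ.lt x y

lemma tle_of_le (τ : TermOrder d) {x y : Fin d → ℕ} (h : ∀ j, x j ≤ y j) : Tle τ x y := by
  rcases eq_or_ne (y - x) 0 with h0 | h0
  · left
    funext j
    have := congrFun h0 j
    simp only [Pi.sub_apply, Pi.zero_apply] at this
    have h3 := h j
    omega
  · right
    have h1 := τ.add_compat x (τ.zero_lt _ h0)
    rw [zero_add] at h1
    have h2 : y - x + x = y := by
      funext j; simp only [Pi.add_apply, Pi.sub_apply]; have h3 := h j; omega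
    rwa [h2] at h1

lemma tle_add (τ : TermOrder d) {x y : Fin d → ℕ} (z : Fin d → ℕ) (h : Tle τ x y) :
    Tle τ (x + z) (y + z) := by
  rcases h with h | h
  · left; rw [h]
  · right; exact τ.add_compat z h

lemma tle_trans (τ : TermOrder d) {x y z : Fin d → ℕ} (h1 : Tle τ x y) (h2 : Tle τ y z) :
    Tle τ x z := by
  rcases h1 with h1 | h1 <;> rcases h2 with h2 | h2
  · left; rw [h1, h2]
  · right; rwa [h1]
  · right; rwa [← h2]
  · right; exact τ.trans h1 h2

lemma not_lt_of_tle (τ : TermOrder d) {x y : Fin d → ℕ} (h : Tle τ x y) (h' : τ.lt y x) :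
    False := by
  rcases h with h | h
  · subst h; exact τ.irrefl _ h'
  · exact τ.irrefl _ (τ.trans h h')

end FrobAux

/-- If `K ∈ ℤ[t_1,…,t_d]` satisfies
`K = (Σ_{a ∈ S} t^a) · Π_i (1 - t^{a_i})` in `ℤ[[t_1,…,t_d]]`, then for every term
order `≺`, the `≺`-maximal exponent of `K` is `F(S)_≺ + Σ_i a_i`. -/
theorem frobenius_from_K_polynomial {d n : ℕ}
    (S : AddSubmonoid (Fin d → ℕ)) (a : Fin n → Fin d → ℕ) (hmin : MinGen a S)
    (hfin : (HSet S).Finite) (hne : (HSet S).Nonempty)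
    (hcone : ∀ x : Fin d → ℕ, natToQ x ∈ cone S)
    (K : MvPolynomial (Fin d) ℤ)
    (hK : (K : MvPowerSeries (Fin d) ℤ) =
      hilbSeries S *
        ∏ i, (1 - MvPowerSeries.monomial (Finsupp.equivFunOnFinite.symm (a i)) (1 : ℤ)))
    (τ : TermOrder d) (F : Fin d → ℕ) (hF : IsFrob τ S F) :
    Finsupp.equivFunOnFinite.symm (F + ∑ i, a i) ∈ K.support ∧
    ∀ e ∈ K.support, Finsupp.equivFunOnFinite e ≠ F + ∑ i, a i →
      τ.lt (Finsupp.equivFunOnFinite e) (F + ∑ i, a i) := by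
  classical
  obtain ⟨hinj, hclos, hminimal⟩ := hmin
  -- basic facts
  have hH : ∀ x : Fin d → ℕ, x ∉ S → x ∈ HSet S := fun x hx => ⟨hcone x, hx⟩
  have hHle : ∀ x ∈ HSet S, FrobAux.Tle τ x F := by
    intro x hx
    by_cases hxF : x = F
    · left; exact hxF
    · right; exact hF.2 x hx hxF
  have hFz : ∀ z : Fin d → ℕ, z ≠ 0 → F + z ∈ S := by
    intro z hz
    by_contra hs
    have h1 : FrobAux.Tle τ (F + z) F := hHle _ (hH _ hs)
    have h2 : τ.lt F (F + z) := by
      have h3 := τ.add_compat F (τ.zero_lt z hz)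
      rw [zero_add, add_comm z F] at h3
      exact h3
    exact FrobAux.not_lt_of_tle τ h1 h2
  have ha0 : ∀ i, a i ≠ 0 := by
    intro i h
    refine hminimal (a i) ⟨i, rfl⟩ ?_
    rw [h]
    exact AddSubmonoid.zero_mem _
  have npos : 0 < n := by
    rcases Nat.eq_zero_or_pos n with h0 | h0
    · exfalso
      subst h0
      have hSbot : S = ⊥ := by
        rw [← hclos, Set.range_eq_empty, AddSubmonoid.closure_empty]
      obtain ⟨x, hx⟩ := hne
      have hxS : x ∉ S := hx.2
      have hx0 : x ≠ 0 := by
        rintro rfl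
        exact hxS (AddSubmonoid.zero_mem S)
      obtain ⟨i, hi⟩ := Function.ne_iff.mp hx0
      simp only [Pi.zero_apply] at hi
      have hinf : (HSet S).Infinite := by
        apply Set.infinite_of_injective_forall_mem (f := fun k : ℕ => (k + 1) • x)
        · intro k l hkl
          have := congrFun hkl i
          simp only [Pi.smul_apply, smul_eq_mul] at this
          have := Nat.eq_of_mul_eq_mul_right (Nat.pos_of_ne_zero hi) this
          omega
        · intro k
          refine ⟨hcone _, ?_⟩
          rw [hSbot, AddSubmonoid.mem_bot]
          intro h
          have := congrFun h i
          simp only [Pi.smul_apply, smul_eq_mul, Pi.zero_apply] at this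
          rcases Nat.mul_eq_zero.mp this with h' | h'
          · omega
          · exact hi h'
      exact hinf hfin
    · exact h0
  haveI : Nonempty (Fin n) := ⟨⟨0, npos⟩⟩
  set c : Fin d → ℕ := ∑ i, a i with hc
  set A : Finset (Fin n) → (Fin d → ℕ) := fun T => ∑ i ∈ T, a i with hA
  set B : Finset (Fin n) → (Fin d →₀ ℕ) :=
    fun T => Finsupp.equivFunOnFinite.symm (∑ i ∈ T, a i) with hB
  have hAapp : ∀ T j, A T j = ∑ i ∈ T, a i j := by
    intro T j; simp [hA, Finset.sum_apply]
  have hcapp : ∀ j, c j = ∑ i, a i j := by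
    intro j; simp [hc, Finset.sum_apply]
  have hAle : ∀ T j, A T j ≤ c j := by
    intro T j
    rw [hAapp, hcapp]
    exact Finset.sum_le_sum_of_subset (Finset.subset_univ T)
  have hBapp : ∀ T j, (B T) j = A T j := by
    intro T j; simp [hB, hA]
  -- coefficient formula
  have hcoeff : ∀ m : Fin d →₀ ℕ, MvPolynomial.coeff m K =
      ∑ T ∈ (univ : Finset (Fin n)).powerset,
        if B T ≤ m ∧ Finsupp.equivFunOnFinite (m - B T) ∈ S
          then (-1 : ℤ)^T.card else 0 := by
    intro m
    rw [← MvPolynomial.coeff_coe, hK, FrobAux.coeff_hilb_prod]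
  -- splitting of c
  have hsplit : ∀ T : Finset (Fin n), ∀ j, A T j + A (univ \ T) j = c j := by
    intro T j
    rw [hAapp, hAapp, hcapp, add_comm]
    rw [Finset.sum_sdiff (Finset.subset_univ T)]
  -- the value of m₀ - B T
  set m₀ : Fin d →₀ ℕ := Finsupp.equivFunOnFinite.symm (F + c) with hm₀
  have hm₀app : ∀ j, m₀ j = F j + c j := by intro j; simp [hm₀]
  have hBlem₀ : ∀ T, B T ≤ m₀ := by
    intro T
    rw [Finsupp.le_def]
    intro j
    rw [hBapp, hm₀app]
    exact (hAle T j).trans (Nat.le_add_left _ _)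
  have hEapp : ∀ (m : Fin d →₀ ℕ) j, Finsupp.equivFunOnFinite m j = m j := fun _ _ => rfl
  -- the value of m₀ - B T
  have hval : ∀ T : Finset (Fin n),
      Finsupp.equivFunOnFinite (m₀ - B T) = F + A (univ \ T) := by
    intro T
    funext j
    rw [hEapp, Finsupp.tsub_apply]
    have h1 := hsplit T j
    have h2 := hm₀app j
    have h3 := hBapp T j
    show m₀ j - (B T) j = F j + A (univ \ T) j
    omega
  -- Part 1 : coefficient at m₀
  have hcF : MvPolynomial.coeff m₀ K = -(-1 : ℤ)^n := by
    rw [hcoeff]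
    have hterm : ∀ T ∈ (univ : Finset (Fin n)).powerset,
        (if B T ≤ m₀ ∧ Finsupp.equivFunOnFinite (m₀ - B T) ∈ S then (-1 : ℤ)^T.card else 0)
          = (-1 : ℤ)^T.card - (if T = univ then (-1 : ℤ)^T.card else 0) := by
      intro T _
      by_cases hT : T = univ
      · subst hT
        rw [if_pos rfl, if_neg, sub_self]
        rintro ⟨-, hmem⟩
        rw [hval] at hmem
        have h0 : A (univ \ univ) = 0 := by
          funext j; rw [hAapp]; simp
        rw [h0, add_zero] at hmem
        exact hF.1.2 hmem
      · rw [if_neg hT, sub_zero, if_pos]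
        refine ⟨hBlem₀ T, ?_⟩
        rw [hval]
        apply hFz
        have hne' : (univ \ T).Nonempty := by
          rw [Finset.sdiff_nonempty]
          intro hsub
          exact hT (Finset.univ_subset_iff.mp hsub)
        obtain ⟨i, hi⟩ := hne'
        obtain ⟨j, hj⟩ := Function.ne_iff.mp (ha0 i)
        intro h0
        have h1 : a i j ≤ A (univ \ T) j := by
          rw [hAapp]
          exact Finset.single_le_sum (f := fun i => a i j) (fun i _ => Nat.zero_le _) hi
        have h2 := congrFun h0 j
        simp only [Pi.zero_apply] at h2 hj
        omega
    rw [Finset.sum_congr rfl hterm, Finset.sum_sub_distrib,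
      Finset.sum_powerset_neg_one_pow_card_of_nonempty Finset.univ_nonempty,
      Finset.sum_ite_eq' _ _ _, if_pos (Finset.mem_powerset_self _), Finset.card_univ,
      Fintype.card_fin, zero_sub]
  constructor
  · rw [MvPolynomial.mem_support_iff, hcF]
    exact neg_ne_zero.mpr (pow_ne_zero _ (by norm_num))
  · intro e he hne2
    rcases τ.total (Finsupp.equivFunOnFinite e) (F + c) with h | h | h
    · exact absurd h hne2
    · exact h
    · exfalso
      have heS : ∀ T : Finset (Fin n), B T ≤ e →
          Finsupp.equivFunOnFinite (e - B T) ∈ S := by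
        intro T hT
        by_contra hs
        have h1 : FrobAux.Tle τ (Finsupp.equivFunOnFinite (e - B T)) F :=
          hHle _ (hH _ hs)
        have h2 : Finsupp.equivFunOnFinite (e - B T) + A T = Finsupp.equivFunOnFinite e := by
          funext j
          have h3 : (B T) j ≤ e j := Finsupp.le_def.mp hT j
          have h4 := hBapp T j
          show (e - B T) j + A T j = e j
          rw [Finsupp.tsub_apply]
          omega
        have h4 := FrobAux.tle_add τ (A T) h1
        rw [h2] at h4
        have h5 : FrobAux.Tle τ (F + A T) (F + c) :=
          FrobAux.tle_of_le τ (fun j => by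
            have := hAle T j
            show F j + A T j ≤ F j + c j
            omega)
        exact FrobAux.not_lt_of_tle τ (FrobAux.tle_trans τ h4 h5) h
      obtain ⟨j0, hj0⟩ : ∃ j, F j + c j < e j := by
        by_contra hcon
        push_neg at hcon
        refine FrobAux.not_lt_of_tle τ (FrobAux.tle_of_le τ (fun j => ?_)) h
        have h2 := hcon j
        have h3 : (Finsupp.equivFunOnFinite e) j = e j := rfl
        show (Finsupp.equivFunOnFinite e) j ≤ F j + c j
        omega
      obtain ⟨N, hNS⟩ : ∃ N : ℕ, ∀ x : Fin d → ℕ, N ≤ x j0 → x ∈ S := by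
        refine ⟨(hfin.toFinset.sup fun y => y j0) + 1, fun x hx => ?_⟩
        by_contra hs
        have h1 : x ∈ hfin.toFinset := hfin.mem_toFinset.mpr (hH x hs)
        have h2 : x j0 ≤ hfin.toFinset.sup fun y => y j0 :=
          Finset.le_sup (f := fun y => y j0) h1
        exact absurd (lt_of_lt_of_le (Nat.lt_succ_of_le h2) hx) (lt_irrefl _)
      obtain ⟨g, hgdef⟩ : ∃ g : ℕ → Fin d → ℕ,
          ∀ M k, g M k = if k = j0 then e k + N + M else e k :=
        ⟨fun M k => if k = j0 then e k + N + M else e k, fun _ _ => rfl⟩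
      obtain ⟨mM, hmMapp⟩ : ∃ mM : ℕ → (Fin d →₀ ℕ), ∀ M k, (mM M) k = g M k :=
        ⟨fun M => Finsupp.equivFunOnFinite.symm (g M), fun _ _ => rfl⟩
      have hgj : ∀ M k, e k ≤ g M k := by
        intro M k; rw [hgdef]; split <;> omega
      have hgj0 : ∀ M, g M j0 = e j0 + N + M := by
        intro M; rw [hgdef, if_pos rfl]
      have hBg : ∀ M T, B T ≤ mM M ↔ B T ≤ e := by
        intro M T
        rw [Finsupp.le_def, Finsupp.le_def]
        constructor
        · intro h' k
          by_cases hk : k = j0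
          · rw [hk]
            have h1 := hAle T j0
            have h2 := hBapp T j0
            omega
          · have h1 := h' k
            have h2 : g M k = e k := by rw [hgdef, if_neg hk]
            rw [hmMapp, h2] at h1
            exact h1
        · intro h' k
          have h1 := h' k
          have h2 := hgj M k
          rw [hmMapp]
          omega
      have hVM : ∀ M, MvPolynomial.coeff (mM M) K =
          ∑ T ∈ (univ : Finset (Fin n)).powerset,
            if B T ≤ e then (-1 : ℤ)^T.card else 0 := by
        intro M
        rw [hcoeff]
        refine Finset.sum_congr rfl fun T _ => ?_
        by_cases hT : B T ≤ e
        · rw [if_pos hT, if_pos]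
          refine ⟨(hBg M T).mpr hT, ?_⟩
          apply hNS
          have h1 : Finsupp.equivFunOnFinite (mM M - B T) j0 = (mM M) j0 - (B T) j0 := by
            rw [hEapp, Finsupp.tsub_apply]
          rw [h1, hmMapp, hgj0]
          have h2 := hAle T j0
          have h3 := hBapp T j0
          omega
        · rw [if_neg hT, if_neg]
          rintro ⟨h1, -⟩
          exact hT ((hBg M T).mp h1)
      have hVe : MvPolynomial.coeff e K =
          ∑ T ∈ (univ : Finset (Fin n)).powerset,
            if B T ≤ e then (-1 : ℤ)^T.card else 0 := by
        rw [hcoeff]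
        refine Finset.sum_congr rfl fun T _ => ?_
        by_cases hT : B T ≤ e
        · rw [if_pos hT, if_pos ⟨hT, heS T hT⟩]
        · rw [if_neg hT, if_neg (by tauto)]
      have hV0 : MvPolynomial.coeff e K ≠ 0 := MvPolynomial.mem_support_iff.mp he
      have hmem : ∀ M : ℕ, mM M ∈ K.support := by
        intro M
        rw [MvPolynomial.mem_support_iff, hVM]
        rw [hVe] at hV0
        exact hV0
      have hinj2 : Function.Injective mM := by
        intro M M' hMM
        have h1 := DFunLike.congr_fun hMM j0
        rw [hmMapp, hmMapp, hgj0, hgj0] at h1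
        omega
      have hinf2 : (↑K.support : Set (Fin d →₀ ℕ)).Infinite :=
        Set.infinite_of_injective_forall_mem hinj2 (fun M => hmem M)
      exact hinf2 K.support.finite_toSet
end

section
/- Let S₁ and S₂ be C-semigroups in ℕ^d with cone(S₁) ∩ ℕ^d = ℕ^d = cone(S₂) ∩ ℕ^d. Then S₁ and S₂ cannot be glued: there is no element c such that S₁ + S₂ is a gluing S₁ +_c S₂ of S₁ and S₂; in particular, there is no c ∈ S₁ ∩ S₂ with G(S₁) ∩ G(S₂) = ℤc. -/
open Finset BigOperators

lemma natToZ_mem_grpOf {d : ℕ} {S : AddSubmonoid (Fin d → ℕ)} {x : Fin d → ℕ}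
    (hx : x ∈ S) : natToZ x ∈ grpOf S :=
  AddSubgroup.subset_closure ⟨x, hx, rfl⟩

lemma grpOf_eq_top {d : ℕ} (hd : 0 < d) (S : AddSubmonoid (Fin d → ℕ))
    (hfin : (HSet S).Finite) (hc : ∀ x : Fin d → ℕ, natToQ x ∈ cone S) :
    grpOf S = ⊤ := by
  obtain ⟨N, hbig⟩ : ∃ N : ℕ, ∀ x : Fin d → ℕ, N ≤ ∑ i, x i → x ∈ S := by
    refine ⟨1 + hfin.toFinset.sup (fun x => ∑ i, x i), fun x hx => ?_⟩
    by_contra hxs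
    have h2 : (∑ i, x i) ≤ hfin.toFinset.sup (fun x => ∑ i, x i) :=
      Finset.le_sup (hfin.mem_toFinset.mpr ⟨hc x, hxs⟩)
    exact Nat.not_succ_le_self _ (by rw [Nat.succ_eq_one_add]; exact hx.trans h2)
  rw [eq_top_iff]
  intro g _
  obtain ⟨M, hM1, hM2⟩ : ∃ M : ℕ, N ≤ M ∧ ∀ i, (g i).natAbs ≤ M := by
    refine ⟨N + ∑ i, (g i).natAbs, Nat.le_add_right _ _, fun i => ?_⟩
    have h3 : (g i).natAbs ≤ ∑ j, (g j).natAbs :=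
      Finset.single_le_sum (f := fun j => (g j).natAbs) (fun j _ => Nat.zero_le _)
        (Finset.mem_univ i)
    omega
  have i0 : Fin d := ⟨0, hd⟩
  have key : ∀ y : Fin d → ℕ, (∀ i, M ≤ y i) → y ∈ S := by
    intro y hy
    apply hbig
    calc N ≤ M := hM1
      _ ≤ y i0 := hy i0
      _ ≤ ∑ i, y i := Finset.single_le_sum (f := fun j => y j)
          (fun j _ => Nat.zero_le _) (Finset.mem_univ i0)
  have haS : (fun i => (g i + (M : ℤ) + (M : ℤ)).toNat) ∈ S := by
    refine key _ (fun i => ?_)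
    have := hM2 i
    omega
  have hbS : (fun _ : Fin d => M + M) ∈ S := key _ (fun i => Nat.le_add_right _ _)
  have hg : g = natToZ (fun i => (g i + (M : ℤ) + (M : ℤ)).toNat) - natToZ (fun _ => M + M) := by
    funext i
    have := hM2 i
    simp only [natToZ, Pi.sub_apply]
    omega
  rw [hg]
  exact sub_mem (natToZ_mem_grpOf haS) (natToZ_mem_grpOf hbS)

/-- Two `C`-semigroups whose cones restrict to all of `ℕ^d` cannot
be glued. -/
theorem no_gluing_of_full_cones {d : ℕ} (S₁ S₂ : AddSubmonoid (Fin d → ℕ))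
    (h1FG : S₁.FG) (h2FG : S₂.FG)
    (h1fin : (HSet S₁).Finite) (h1ne : (HSet S₁).Nonempty)
    (h2fin : (HSet S₂).Finite) (h2ne : (HSet S₂).Nonempty)
    (hc1 : ∀ x : Fin d → ℕ, natToQ x ∈ cone S₁)
    (hc2 : ∀ x : Fin d → ℕ, natToQ x ∈ cone S₂) :
    (¬ ∃ c : Fin d → ℕ, IsGluing (S₁ ⊔ S₂) S₁ S₂ c) ∧
    (¬ ∃ c : Fin d → ℕ, c ∈ S₁ ∧ c ∈ S₂ ∧
      grpOf S₁ ⊓ grpOf S₂ = AddSubgroup.zmultiples (natToZ c)) := by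
  rcases Nat.eq_zero_or_pos d with hd | hd
  · subst hd
    obtain ⟨h, hh⟩ := h1ne
    have : h = 0 := Subsingleton.elim _ _
    exact absurd (this ▸ S₁.zero_mem) hh.2
  have key : ¬ ∃ c : Fin d → ℕ, c ∈ S₁ ∧ c ∈ S₂ ∧
      grpOf S₁ ⊓ grpOf S₂ = AddSubgroup.zmultiples (natToZ c) := by
    rintro ⟨c, hcS1, hcS2, hg⟩
    have htop : AddSubgroup.zmultiples (natToZ c) = (⊤ : AddSubgroup (Fin d → ℤ)) := by
      rw [← hg, grpOf_eq_top hd S₁ h1fin hc1, grpOf_eq_top hd S₂ h2fin hc2,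
        inf_top_eq]
    have hcj : ∀ j, c j = 1 := by
      intro j
      have hmem : (Pi.single j (1:ℤ)) ∈ AddSubgroup.zmultiples (natToZ c) := by
        rw [htop]; trivial
      obtain ⟨k, hk⟩ := AddSubgroup.mem_zmultiples_iff.mp hmem
      have hkj := congrFun hk j
      simp only [Pi.smul_apply, smul_eq_mul, natToZ, Pi.single_eq_same] at hkj
      have hdvd : ((c j : ℤ)) ∣ 1 := ⟨k, by rw [mul_comm]; exact hkj.symm⟩
      have := Int.eq_one_of_dvd_one (by positivity) hdvd
      exact_mod_cast this
    obtain ⟨h, hh⟩ := h1ne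
    have hmem : natToZ h ∈ AddSubgroup.zmultiples (natToZ c) := by
      rw [htop]; trivial
    obtain ⟨k, hk⟩ := AddSubgroup.mem_zmultiples_iff.mp hmem
    have hkeq : ∀ j, k = (h j : ℤ) := by
      intro j
      have := congrFun hk j
      simp only [Pi.smul_apply, smul_eq_mul, natToZ, hcj j] at this
      omega
    have j0 : Fin d := ⟨0, hd⟩
    have hhc : h = (h j0) • c := by
      funext j
      have h1 := hkeq j
      have h2 := hkeq j0
      simp only [Pi.smul_apply, smul_eq_mul, hcj j]
      omega
    exact hh.2 (hhc ▸ AddSubmonoid.nsmul_mem S₁ hcS1 (h j0))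
  constructor
  · rintro ⟨c, hG⟩
    exact key ⟨c, hG.mem₁, hG.mem₂, hG.grp⟩
  · exact key
end

section
/- Let S = ⟨a_1,…,a_n⟩ ⊆ ℕ^d be an affine semigroup such that the subgroup G(S) of ℤ^d generated by S has rank strictly greater than 1. Then for every f ∈ PF(S) and every row-factorization matrix M of f, det M = 0. -/
open Finset BigOperators

/-- If the group `G(S)` generated by `S` has rank `> 1`, every
row-factorization matrix has determinant zero. -/
theorem det_RFMatrix_eq_zero {n d : ℕ}
    (S : AddSubmonoid (Fin d → ℕ)) (a : Fin n → Fin d → ℕ) (hmin : MinGen a S)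
    (hrank : 1 < Module.rank ℤ ↥(grpOf S))
    (f : Fin d → ℕ) (hf : f ∈ PF S)
    (M : Matrix (Fin n) (Fin n) ℤ) (hM : IsRFMatrix a f M) :
    M.det = 0 := by
  by_contra hdet
  obtain ⟨⟨hfc, hfS⟩, hfPF⟩ := hf
  have hf0 : f ≠ 0 := fun h => hfS (h ▸ S.zero_mem)
  obtain ⟨k0, hk0⟩ : ∃ k, f k ≠ 0 := by
    by_contra h; push_neg at h; exact hf0 (funext h)
  obtain ⟨hdiag, hposM, hrow⟩ := hM
  set Mq : Matrix (Fin n) (Fin n) ℚ := M.map (Int.cast) with hMqdef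
  have hMqdet : Mq.det = (M.det : ℚ) := by
    rw [hMqdef]; exact (RingHom.map_det (Int.castRingHom ℚ) M).symm
  have hrowQ : ∀ i k, ∑ j, (M i j : ℚ) * (a j k : ℚ) = (f k : ℚ) := by
    intro i k
    have h := congrFun (hrow i) k
    simp only [Finset.sum_apply, Pi.smul_apply, natToZ, smul_eq_mul] at h
    exact_mod_cast h
  set A : Matrix (Fin n) (Fin d) ℚ := Matrix.of (fun j k => ((a j k : ℚ))) with hAdef
  set Fm : Matrix (Fin n) (Fin d) ℚ := Matrix.of (fun _ k => ((f k : ℚ))) with hFdef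
  have hMA : Mq * A = Fm := by
    ext i k
    simp only [Matrix.mul_apply, hAdef, hFdef, hMqdef, Matrix.of_apply, Matrix.map_apply]
    exact hrowQ i k
  have hu : IsUnit Mq.det := by
    rw [hMqdet]
    exact isUnit_iff_ne_zero.mpr (by exact_mod_cast hdet)
  have hA : A = Mq⁻¹ * Fm := by
    calc A = (Mq⁻¹ * Mq) * A := by rw [Matrix.nonsing_inv_mul Mq hu, Matrix.one_mul]
    _ = Mq⁻¹ * (Mq * A) := by rw [Matrix.mul_assoc]
    _ = Mq⁻¹ * Fm := by rw [hMA]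
  have hgen : ∀ j : Fin n, ∃ c : ℚ, ∀ k, ((a j k : ℚ)) = c * f k := by
    intro j
    refine ⟨∑ i, Mq⁻¹ j i, fun k => ?_⟩
    have h := congrFun (congrFun hA j) k
    simp only [Matrix.mul_apply, hAdef, hFdef, Matrix.of_apply] at h
    rw [h, Finset.sum_mul]
  -- the subgroup of vectors that are rational multiples of f
  set T : AddSubgroup (Fin d → ℤ) :=
    { carrier := {v | ∃ q : ℚ, ∀ k, ((v k : ℚ)) = q * f k}
      zero_mem' := ⟨0, fun k => by simp⟩
      add_mem' := by
        rintro x y ⟨p, hp⟩ ⟨q, hq⟩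
        exact ⟨p + q, fun k => by
          simp only [Pi.add_apply, Int.cast_add, hp k, hq k, add_mul]⟩
      neg_mem' := by
        rintro x ⟨p, hp⟩
        exact ⟨-p, fun k => by
          simp only [Pi.neg_apply, Int.cast_neg, hp k, neg_mul]⟩ } with hTdef
  have hmemT : ∀ x : Fin d → ℕ, x ∈ S → natToZ x ∈ T := by
    intro x hx
    have hx' : x ∈ AddSubmonoid.closure (Set.range a) := by
      rw [hmin.2.1]; exact hx
    refine AddSubmonoid.closure_induction ?_ ?_ ?_ hx'
    · rintro y ⟨j, rfl⟩
      obtain ⟨c, hc⟩ := hgen j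
      exact ⟨c, fun k => by
        simpa only [natToZ, Int.cast_natCast] using hc k⟩
    · exact ⟨0, fun k => by simp [natToZ]⟩
    · intro y z _ _ hy hz
      have : natToZ (y + z) = natToZ y + natToZ z := by
        funext k; simp [natToZ]
      rw [this]; exact T.add_mem hy hz
  have hsub : grpOf S ≤ T := by
    rw [grpOf]
    refine (AddSubgroup.closure_le _).mpr ?_
    rintro v ⟨s, hs, rfl⟩
    exact hmemT s hs
  -- evaluation at k0 is injective on grpOf S
  let L : (↥(grpOf S)) →ₗ[ℤ] ℤ :=
    ((Pi.evalAddMonoidHom (fun _ : Fin d => ℤ) k0).comp (grpOf S).subtype).toIntLinearMap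
  have hfk0Q : ((f k0 : ℚ)) ≠ 0 := Nat.cast_ne_zero.mpr hk0
  have hinj : Function.Injective L := by
    intro x y hxy
    obtain ⟨p, hp⟩ := hsub x.2
    obtain ⟨q, hq⟩ := hsub y.2
    have hk : ((x : Fin d → ℤ) k0 : ℚ) = ((y : Fin d → ℤ) k0 : ℚ) := by
      exact_mod_cast congrArg (Int.cast : ℤ → ℚ) hxy
    have hpq : p = q := by
      have := hk
      rw [hp k0, hq k0] at this
      exact mul_right_cancel₀ hfk0Q this
    have : (x : Fin d → ℤ) = (y : Fin d → ℤ) := by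
      funext k
      have : ((x : Fin d → ℤ) k : ℚ) = ((y : Fin d → ℤ) k : ℚ) := by
        rw [hp k, hq k, hpq]
      exact_mod_cast this
    exact Subtype.ext this
  have hle : Module.rank ℤ ↥(grpOf S) ≤ Module.rank ℤ ℤ :=
    LinearMap.rank_le_of_injective L hinj
  rw [Module.rank_self] at hle
  exact absurd (lt_of_lt_of_le hrank hle) (lt_irrefl 1)
end
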